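/- Let n, m be positive integers with n ≤ m, and write m = kn + r with integers k ≥ 1 and 0 ≤ r < n. If k is even and r = 0, then the independence number of the bishop graph on the surface of the n × n × m square prism satisfies β₀(B³_{n,n,m}) ≤ n + 5. -/
import Mathlib


/-- Points of `ℤ³`, used as *doubled* integer coordinates on the surface of a cuboid. -/
abbrev Pt : Type := Fin 3 → ℤ

/-- Squared euclidean distance between two points. -/
def dist2 (v w : Pt) : ℤ := ∑ j, (v j - w j) ^ 2

/-- The (doubled) bounds of the `n × n × m` cuboid `[0,n] × [0,n] × [0,m]`. -/
def bnd (n m : ℕ) : Pt := ![2 * (n : ℤ), 2 * (n : ℤ), 2 * (m : ℤ)]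

/-- `c` is the doubled center of a unit square of the tiling of the surface of the
`n × n × m` cuboid: all coordinates are within bounds, exactly one coordinate is
extremal (it determines the face the square lies on) and the other two coordinates
are odd (the center lies in the interior of that face). -/
def IsSurfSq (n m : ℕ) (c : Pt) : Prop :=
  (∀ j, 0 ≤ c j ∧ c j ≤ bnd n m j) ∧
  ∃ i, (c i = 0 ∨ c i = bnd n m i) ∧ ∀ j, j ≠ i → Odd (c j)

/-- `v` is a (doubled) corner of the unit square with doubled center `c`: corners
are grid points (all coordinates even) whose every coordinate differs from that of
the center by at most one. -/
def IsSqCorner (c v : Pt) : Prop :=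
  (∀ j, Even (v j)) ∧ ∀ j, (v j - c j) ^ 2 ≤ 1

/-- Two unit squares of the surface of the `n × n × m` cuboid are *diagonally
adjacent* iff they are distinct and their closures meet in exactly one point,
i.e. they share exactly one corner.  (Squares sharing a whole edge — possibly an
edge of the cuboid — share two corners, so are not diagonally adjacent.) -/
def DiagAdj (n m : ℕ) (c d : Pt) : Prop :=
  IsSurfSq n m c ∧ IsSurfSq n m d ∧ c ≠ d ∧
    ∃! v, IsSqCorner c v ∧ IsSqCorner d v

/-- A bishop can move from square `c` to square `d` in a single move: there is a
chain `u 0 = c, …, u k = d` of consecutively diagonally adjacent squares, `p i`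
being the common corner of `u i` and `u (i+1)`, such that the chain passes
straight through every intermediate square, i.e. enters and leaves it at a pair
of *opposite* corners (doubled squared distance `8`). -/
def BishopMove (n m : ℕ) (c d : Pt) : Prop :=
  ∃ (k : ℕ) (u : ℕ → Pt) (p : ℕ → Pt), 1 ≤ k ∧ u 0 = c ∧ u k = d ∧
    (∀ i < k, DiagAdj n m (u i) (u (i + 1)) ∧
      IsSqCorner (u i) (p i) ∧ IsSqCorner (u (i + 1)) (p i)) ∧
    (∀ i, 1 ≤ i → i < k → dist2 (p (i - 1)) (p i) = 8)

/-- The unit squares of the surface of the `n × n × m` cuboid. -/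
def SurfSq (n m : ℕ) : Type := {c : Pt // IsSurfSq n m c}

/-- The bishop graph `B³_{n,n,m}` on the surface of the `n × n × m` square prism:
two distinct squares are adjacent iff a bishop placed on one can reach the other
in a single move. -/
def BishopGraph (n m : ℕ) : SimpleGraph (SurfSq n m) :=
  SimpleGraph.fromRel fun c d => BishopMove n m c.1 d.1

/-- The independence number `β₀` of a graph: the maximum cardinality of a set of
pairwise non-adjacent vertices. -/
noncomputable def beta0 {V : Type*} (G : SimpleGraph V) : ℕ :=
  sSup {k | ∃ s : Finset V, (∀ a ∈ s, ∀ b ∈ s, ¬ G.Adj a b) ∧ s.card = k}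

/-- A *flag*: a surface square together with an ordered pair of opposite corners
(one of the two diagonals of the square, with a direction). -/
structure DiagFlag (n m : ℕ) where
  sq : Pt
  p : Pt
  q : Pt
  hsq : IsSurfSq n m sq
  hp : IsSqCorner sq p
  hq : IsSqCorner sq q
  hpq : dist2 p q = 8

/-- Two flags are adjacent iff their squares are diagonally adjacent and the
shared corner is an endpoint of the chosen diagonal of each square, so that the
two chosen diagonals form a straight diagonal continuation. -/
def DiagFlagAdj (n m : ℕ) (f g : DiagFlag n m) : Prop :=
  DiagAdj n m f.sq g.sq ∧
  ∃ v, IsSqCorner f.sq v ∧ IsSqCorner g.sq v ∧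
    (v = f.p ∨ v = f.q) ∧ (v = g.p ∨ v = g.q)

/-- `D` is a *maximal diagonal* of the surface of the `n × n × m` cuboid: the set
of squares of a connected component of the flag-adjacency relation, i.e. the full
trajectory of a bishop moving in one diagonal direction, viewed as a set of
squares. -/
def IsMaxDiagonal (n m : ℕ) (D : Set Pt) : Prop :=
  ∃ f : DiagFlag n m,
    D = {s | ∃ g : DiagFlag n m, Relation.ReflTransGen (DiagFlagAdj n m) f g ∧ g.sq = s}

/-- A maximal diagonal is *closed* if its squares can be ordered so that they
form a cycle: consecutive squares, including the last and the first, are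
diagonally adjacent. -/
def IsClosedMaxDiagonal (n m : ℕ) (D : Set Pt) : Prop :=
  IsMaxDiagonal n m D ∧
  ∃ (k : ℕ) (f : ZMod k → Pt), Function.Injective f ∧ Set.range f = D ∧
    ∀ i, DiagAdj n m (f i) (f (i + 1))

namespace BishopAux

lemma sq1 (x : ℤ) : x^2 ≤ 1 ↔ -1 ≤ x ∧ x ≤ 1 := by
  constructor
  · intro h; constructor <;> nlinarith
  · rintro ⟨h1, h2⟩; nlinarith

lemma dist2_mk (a b c d e f : ℤ) : dist2 ![a,b,c] ![d,e,f] = (a-d)^2+(b-e)^2+(c-f)^2 := by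
  simp [dist2, Fin.sum_univ_three]

/-- Unfolded corner condition for concrete triples. -/
lemma corner_mk_iff (a b c : ℤ) (v : Pt) :
    IsSqCorner ![a,b,c] v ↔
      (Even (v 0) ∧ Even (v 1) ∧ Even (v 2)) ∧
      ((v 0 - a)^2 ≤ 1 ∧ (v 1 - b)^2 ≤ 1 ∧ (v 2 - c)^2 ≤ 1) := by
  constructor
  · rintro ⟨h1, h2⟩
    exact ⟨⟨h1 0, h1 1, h1 2⟩, by simpa using h2 0, by simpa using h2 1, by simpa using h2 2⟩
  · rintro ⟨⟨e0, e1, e2⟩, ⟨d0, d1, d2⟩⟩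
    refine ⟨fun j => ?_, fun j => ?_⟩ <;> fin_cases j <;> simp_all

lemma corner_mk (a b c d e f : ℤ) :
    IsSqCorner ![a,b,c] ![d,e,f] ↔
      (Even d ∧ Even e ∧ Even f) ∧
      ((d - a)^2 ≤ 1 ∧ (e - b)^2 ≤ 1 ∧ (f - c)^2 ≤ 1) := by
  rw [corner_mk_iff]; simp

lemma surf_mk_iff (n m : ℕ) (a b c : ℤ) :
    IsSurfSq n m ![a,b,c] ↔
      ((0 ≤ a ∧ a ≤ 2*n) ∧ (0 ≤ b ∧ b ≤ 2*n) ∧ (0 ≤ c ∧ c ≤ 2*m)) ∧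
      (((a = 0 ∨ a = 2*n) ∧ Odd b ∧ Odd c) ∨
       ((b = 0 ∨ b = 2*n) ∧ Odd a ∧ Odd c) ∨
       ((c = 0 ∨ c = 2*m) ∧ Odd a ∧ Odd b)) := by
  constructor
  · rintro ⟨h1, i, hi, hodd⟩
    refine ⟨⟨by simpa [bnd] using h1 0, by simpa [bnd] using h1 1, by simpa [bnd] using h1 2⟩, ?_⟩
    fin_cases i
    · exact Or.inl ⟨by simpa [bnd] using hi, by simpa using hodd 1 (by decide),
        by simpa using hodd 2 (by decide)⟩
    · exact Or.inr (Or.inl ⟨by simpa [bnd] using hi, by simpa using hodd 0 (by decide),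
        by simpa using hodd 2 (by decide)⟩)
    · exact Or.inr (Or.inr ⟨by simpa [bnd] using hi, by simpa using hodd 0 (by decide),
        by simpa using hodd 1 (by decide)⟩)
  · rintro ⟨⟨ha, hb, hc⟩, h⟩
    refine ⟨fun j => by fin_cases j <;> simp [bnd] <;> omega, ?_⟩
    rcases h with ⟨hi, o1, o2⟩ | ⟨hi, o1, o2⟩ | ⟨hi, o1, o2⟩
    · exact ⟨0, by simpa [bnd] using hi, fun j hj => by fin_cases j <;> simp_all⟩
    · exact ⟨1, by simpa [bnd] using hi, fun j hj => by fin_cases j <;> simp_all⟩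
    · exact ⟨2, by simpa [bnd] using hi, fun j hj => by fin_cases j <;> simp_all⟩

/-- Quarter-turn symmetry of the prism. -/
def rot (n : ℕ) (v : Pt) : Pt := ![2*(n:ℤ) - v 1, v 0, v 2]

/-- Reflection in the horizontal midplane. -/
def flip (m : ℕ) (v : Pt) : Pt := ![v 0, v 1, 2*(m:ℤ) - v 2]

lemma rot_mk (n : ℕ) (a b c : ℤ) : rot n ![a,b,c] = ![2*(n:ℤ) - b, a, c] := by
  funext j; fin_cases j <;> simp [rot]

lemma flip_mk (m : ℕ) (a b c : ℤ) : flip m ![a,b,c] = ![a, b, 2*(m:ℤ) - c] := by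
  funext j; fin_cases j <;> simp [flip]

lemma rot_rot (n : ℕ) (v : Pt) : rot n (rot n (rot n (rot n v))) = v := by
  funext j; fin_cases j <;> simp [rot] <;> omega

lemma flip_flip (m : ℕ) (v : Pt) : flip m (flip m v) = v := by
  funext j; fin_cases j <;> simp [flip]

lemma rot_inj (n : ℕ) {v w : Pt} (h : rot n v = rot n w) : v = w := by
  have h0 := congrFun h 0; have h1 := congrFun h 1; have h2 := congrFun h 2
  simp [rot] at h0 h1 h2
  funext j; fin_cases j <;> simp <;> omega

lemma flip_inj (m : ℕ) {v w : Pt} (h : flip m v = flip m w) : v = w := by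
  have h0 := congrFun h 0; have h1 := congrFun h 1; have h2 := congrFun h 2
  simp [flip] at h0 h1 h2
  funext j; fin_cases j <;> simp <;> omega

lemma rot_surf {n m : ℕ} {c : Pt} (h : IsSurfSq n m c) : IsSurfSq n m (rot n c) := by
  have hc : c = ![c 0, c 1, c 2] := by funext j; fin_cases j <;> simp
  rw [hc] at h; rw [hc, rot_mk]
  rw [surf_mk_iff] at h ⊢
  obtain ⟨⟨ha, hb, hcc⟩, h2⟩ := h
  refine ⟨⟨by omega, by omega, by omega⟩, ?_⟩
  rcases h2 with ⟨hi, o1, o2⟩ | ⟨hi, o1, o2⟩ | ⟨hi, o1, o2⟩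
  · exact Or.inr (Or.inl ⟨hi, (by rcases o1 with ⟨t, ht⟩; exact ⟨n - t - 1, by omega⟩), o2⟩)
  · exact Or.inl ⟨by omega, o1, o2⟩
  · exact Or.inr (Or.inr ⟨hi, (by rcases o2 with ⟨t, ht⟩; exact ⟨n - t - 1, by omega⟩), o1⟩)

lemma flip_surf {n m : ℕ} {c : Pt} (h : IsSurfSq n m c) : IsSurfSq n m (flip m c) := by
  have hc : c = ![c 0, c 1, c 2] := by funext j; fin_cases j <;> simp
  rw [hc] at h; rw [hc, flip_mk]
  rw [surf_mk_iff] at h ⊢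
  obtain ⟨⟨ha, hb, hcc⟩, h2⟩ := h
  refine ⟨⟨by omega, by omega, by omega⟩, ?_⟩
  rcases h2 with ⟨hi, o1, o2⟩ | ⟨hi, o1, o2⟩ | ⟨hi, o1, o2⟩
  · exact Or.inl ⟨hi, o1, by rcases o2 with ⟨t, ht⟩; exact ⟨m - t - 1, by omega⟩⟩
  · exact Or.inr (Or.inl ⟨hi, o1, by rcases o2 with ⟨t, ht⟩; exact ⟨m - t - 1, by omega⟩⟩)
  · exact Or.inr (Or.inr ⟨by omega, o1, o2⟩)

lemma rot_corner {n : ℕ} {c v : Pt} (h : IsSqCorner c v) : IsSqCorner (rot n c) (rot n v) := by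
  obtain ⟨h1, h2⟩ := h
  have e1 := h2 1
  rw [sq1] at e1
  constructor
  · intro j; fin_cases j
    · show Even (2*(n:ℤ) - v 1)
      rcases h1 1 with ⟨t, ht⟩; exact ⟨n - t, by omega⟩
    · exact h1 0
    · exact h1 2
  · intro j; fin_cases j
    · show ((2*(n:ℤ) - v 1) - (2*(n:ℤ) - c 1))^2 ≤ 1
      rw [sq1]; omega
    · exact h2 0
    · exact h2 2

lemma flip_corner {m : ℕ} {c v : Pt} (h : IsSqCorner c v) : IsSqCorner (flip m c) (flip m v) := by
  obtain ⟨h1, h2⟩ := h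
  have e2 := h2 2
  rw [sq1] at e2
  constructor
  · intro j; fin_cases j
    · exact h1 0
    · exact h1 1
    · show Even (2*(m:ℤ) - v 2)
      rcases h1 2 with ⟨t, ht⟩; exact ⟨m - t, by omega⟩
  · intro j; fin_cases j
    · exact h2 0
    · exact h2 1
    · show ((2*(m:ℤ) - v 2) - (2*(m:ℤ) - c 2))^2 ≤ 1
      rw [sq1]; omega


lemma rot_diagAdj {n m : ℕ} {c d : Pt} (h : DiagAdj n m c d) :
    DiagAdj n m (rot n c) (rot n d) := by
  obtain ⟨hc, hd, hne, v, ⟨hvc, hvd⟩, huniq⟩ := h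
  refine ⟨rot_surf hc, rot_surf hd, fun he => hne (rot_inj n he), rot n v,
    ⟨rot_corner hvc, rot_corner hvd⟩, ?_⟩
  rintro w ⟨hwc, hwd⟩
  set w' := rot n (rot n (rot n w)) with hw'
  have hr : rot n w' = w := rot_rot n w
  have h1 : IsSqCorner c w' := by
    have := rot_corner (n := n) (rot_corner (n := n) (rot_corner (n := n) hwc))
    rwa [rot_rot] at this
  have h2 : IsSqCorner d w' := by
    have := rot_corner (n := n) (rot_corner (n := n) (rot_corner (n := n) hwd))
    rwa [rot_rot] at this
  rw [← hr, huniq w' ⟨h1, h2⟩]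

lemma flip_diagAdj {n m : ℕ} {c d : Pt} (h : DiagAdj n m c d) :
    DiagAdj n m (flip m c) (flip m d) := by
  obtain ⟨hc, hd, hne, v, ⟨hvc, hvd⟩, huniq⟩ := h
  refine ⟨flip_surf hc, flip_surf hd, fun he => hne (flip_inj m he), flip m v,
    ⟨flip_corner hvc, flip_corner hvd⟩, ?_⟩
  rintro w ⟨hwc, hwd⟩
  set w' := flip m w with hw'
  have hr : flip m w' = w := flip_flip m w
  have h1 : IsSqCorner c w' := by
    have := flip_corner (m := m) hwc
    rwa [flip_flip] at this
  have h2 : IsSqCorner d w' := by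
    have := flip_corner (m := m) hwd
    rwa [flip_flip] at this
  rw [← hr, huniq w' ⟨h1, h2⟩]

end BishopAux
namespace BishopAux

/-- generic mod-shift tool -/
lemma emod_shift (D w j : ℤ) : (w + j) % D = (w % D + j) % D := by
  have h : w + j = w % D + j + D * (w / D) := by rw [Int.emod_def]; ring
  rw [h, Int.add_mul_emod_self_left]

lemma vec_ext {a b c d e f : ℤ} (h1 : a = d) (h2 : b = e) (h3 : c = f) :
    (![a,b,c] : Pt) = ![d,e,f] := by rw [h1, h2, h3]

/-- The cylindrical chart for points on the side surface: `w` is the position along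
the perimeter (taken mod `8n`), `z` the height. -/
def ch (n : ℕ) (w z : ℤ) : Pt :=
  if w % (8*(n:ℤ)) < 2*(n:ℤ) then ![w % (8*(n:ℤ)), 0, z]
  else if w % (8*(n:ℤ)) < 4*(n:ℤ) then ![2*(n:ℤ), w % (8*(n:ℤ)) - 2*(n:ℤ), z]
  else if w % (8*(n:ℤ)) < 6*(n:ℤ) then ![6*(n:ℤ) - w % (8*(n:ℤ)), 2*(n:ℤ), z]
  else ![0, 8*(n:ℤ) - w % (8*(n:ℤ)), z]

/-- Square of a cap run (on the top `f = 2m` or bottom `f = 0` face), entered at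
perimeter position `ω`, after `t` diagonal steps. -/
def capt (n : ℕ) (f : ℤ) (ω t : ℤ) : Pt :=
  if ω % (8*(n:ℤ)) < 2*(n:ℤ) then ![ω % (8*(n:ℤ)) + 1 + 2*t, 1 + 2*t, f]
  else if ω % (8*(n:ℤ)) < 4*(n:ℤ) then ![2*(n:ℤ) - 1 - 2*t, ω % (8*(n:ℤ)) - 2*(n:ℤ) + 1 + 2*t, f]
  else if ω % (8*(n:ℤ)) < 6*(n:ℤ) then ![6*(n:ℤ) - ω % (8*(n:ℤ)) - 1 - 2*t, 2*(n:ℤ) - 1 - 2*t, f]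
  else ![1 + 2*t, 8*(n:ℤ) - ω % (8*(n:ℤ)) - 1 - 2*t, f]

/-- Corner points along a cap run. -/
def capc (n : ℕ) (f : ℤ) (ω t : ℤ) : Pt :=
  if ω % (8*(n:ℤ)) < 2*(n:ℤ) then ![ω % (8*(n:ℤ)) + 2*t, 2*t, f]
  else if ω % (8*(n:ℤ)) < 4*(n:ℤ) then ![2*(n:ℤ) - 2*t, ω % (8*(n:ℤ)) - 2*(n:ℤ) + 2*t, f]
  else if ω % (8*(n:ℤ)) < 6*(n:ℤ) then ![6*(n:ℤ) - ω % (8*(n:ℤ)) - 2*t, 2*(n:ℤ) - 2*t, f]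
  else ![2*t, 8*(n:ℤ) - ω % (8*(n:ℤ)) - 2*t, f]

lemma ch_congr (n : ℕ) {w w' : ℤ} (z : ℤ) (h : w % (8*(n:ℤ)) = w' % (8*(n:ℤ))) :
    ch n w z = ch n w' z := by unfold ch; rw [h]

lemma capt_congr (n : ℕ) (f : ℤ) {ω ω' : ℤ} (t : ℤ) (h : ω % (8*(n:ℤ)) = ω' % (8*(n:ℤ))) :
    capt n f ω t = capt n f ω' t := by unfold capt; rw [h]

lemma capc_congr (n : ℕ) (f : ℤ) {ω ω' : ℤ} (t : ℤ) (h : ω % (8*(n:ℤ)) = ω' % (8*(n:ℤ))) :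
    capc n f ω t = capc n f ω' t := by unfold capc; rw [h]

lemma key_add_2n (n : ℕ) (hn : 0 < n) (w : ℤ) :
    (w + 2*(n:ℤ)) % (8*(n:ℤ)) =
      if w % (8*(n:ℤ)) < 6*(n:ℤ) then w % (8*(n:ℤ)) + 2*(n:ℤ) else w % (8*(n:ℤ)) - 6*(n:ℤ) := by
  have h8 : (0:ℤ) < 8*n := by positivity
  have h0 : 0 ≤ w % (8*(n:ℤ)) := Int.emod_nonneg _ (ne_of_gt h8)
  have h1 : w % (8*(n:ℤ)) < 8*n := Int.emod_lt_of_pos _ h8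
  rw [emod_shift]
  split_ifs with h
  · exact Int.emod_eq_of_lt (by omega) (by omega)
  · have e : w % (8*(n:ℤ)) + 2*n = w % (8*(n:ℤ)) - 6*n + 8*(n:ℤ)*1 := by ring
    rw [e, Int.add_mul_emod_self_left]
    exact Int.emod_eq_of_lt (by omega) (by omega)

lemma ch_add_2n (n : ℕ) (hn : 0 < n) (w z : ℤ) : ch n (w + 2*(n:ℤ)) z = rot n (ch n w z) := by
  have h8 : (0:ℤ) < 8*n := by positivity
  have h0 : 0 ≤ w % (8*(n:ℤ)) := Int.emod_nonneg _ (ne_of_gt h8)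
  have h1 : w % (8*(n:ℤ)) < 8*n := Int.emod_lt_of_pos _ h8
  unfold ch
  rw [key_add_2n n hn w]
  split_ifs <;> (funext j; fin_cases j <;> simp [rot] <;> omega)

lemma capt_add_2n (n : ℕ) (hn : 0 < n) (f ω t : ℤ) :
    capt n f (ω + 2*(n:ℤ)) t = rot n (capt n f ω t) := by
  have h8 : (0:ℤ) < 8*n := by positivity
  have h0 : 0 ≤ ω % (8*(n:ℤ)) := Int.emod_nonneg _ (ne_of_gt h8)
  have h1 : ω % (8*(n:ℤ)) < 8*n := Int.emod_lt_of_pos _ h8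
  unfold capt
  rw [key_add_2n n hn ω]
  split_ifs <;> (funext j; fin_cases j <;> simp [rot] <;> omega)

lemma capc_add_2n (n : ℕ) (hn : 0 < n) (f ω t : ℤ) :
    capc n f (ω + 2*(n:ℤ)) t = rot n (capc n f ω t) := by
  have h8 : (0:ℤ) < 8*n := by positivity
  have h0 : 0 ≤ ω % (8*(n:ℤ)) := Int.emod_nonneg _ (ne_of_gt h8)
  have h1 : ω % (8*(n:ℤ)) < 8*n := Int.emod_lt_of_pos _ h8
  unfold capc
  rw [key_add_2n n hn ω]
  split_ifs <;> (funext j; fin_cases j <;> simp [rot] <;> omega)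

lemma flip_ch (n m : ℕ) (w z : ℤ) : flip m (ch n w z) = ch n w (2*(m:ℤ) - z) := by
  unfold ch; split_ifs <;> (funext j; fin_cases j <;> simp [flip])

lemma flip_capt (n m : ℕ) (f ω t : ℤ) : flip m (capt n f ω t) = capt n (2*(m:ℤ) - f) ω t := by
  unfold capt; split_ifs <;> (funext j; fin_cases j <;> simp [flip])

lemma flip_capc (n m : ℕ) (f ω t : ℤ) : flip m (capc n f ω t) = capc n (2*(m:ℤ) - f) ω t := by
  unfold capc; split_ifs <;> (funext j; fin_cases j <;> simp [flip])

lemma dist2_rot (n : ℕ) (v w : Pt) : dist2 (rot n v) (rot n w) = dist2 v w := by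
  simp [dist2, rot, Fin.sum_univ_three]; ring

lemma dist2_flip (m : ℕ) (v w : Pt) : dist2 (flip m v) (flip m w) = dist2 v w := by
  simp [dist2, flip, Fin.sum_univ_three]; ring

/-- The master lifting combinator: to prove a perimeter-periodic, rotation-equivariant
property for all `w`, it suffices to prove it on the base region `[0, 2n)`. -/
lemma lift_all {n : ℕ} (hn : 0 < n) {P : ℤ → Prop}
    (hmod : ∀ w, P (w % (8*(n:ℤ))) → P w)
    (hrot : ∀ w, P w → P (w + 2*(n:ℤ)))
    (hbase : ∀ w, 0 ≤ w → w < 2*(n:ℤ) → P w) : ∀ w, P w := by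
  intro w
  apply hmod
  have h8 : (0:ℤ) < 8*n := by positivity
  have h0 : 0 ≤ w % (8*(n:ℤ)) := Int.emod_nonneg _ (ne_of_gt h8)
  have h1 : w % (8*(n:ℤ)) < 8*n := Int.emod_lt_of_pos _ h8
  set r := w % (8*(n:ℤ)) with hr
  clear_value r
  rcases lt_or_ge r (2*(n:ℤ)) with h | h
  · exact hbase r h0 h
  rcases lt_or_ge r (4*(n:ℤ)) with h2 | h2
  · have := hrot (r - 2*n) (hbase _ (by omega) (by omega))
    have e : r - 2*(n:ℤ) + 2*n = r := by ring
    rwa [e] at this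
  rcases lt_or_ge r (6*(n:ℤ)) with h3 | h3
  · have := hrot _ (hrot (r - 4*n) (hbase _ (by omega) (by omega)))
    have e : r - 4*(n:ℤ) + 2*n + 2*n = r := by ring
    rwa [e] at this
  · have := hrot _ (hrot _ (hrot (r - 6*n) (hbase _ (by omega) (by omega))))
    have e : r - 6*(n:ℤ) + 2*n + 2*n + 2*n = r := by ring
    rwa [e] at this

/-- A step datum: two diagonally adjacent squares together with their shared corner. -/
structure StepDat (n m : ℕ) (A B v : Pt) : Prop where
  adj : DiagAdj n m A B
  cA : IsSqCorner A v
  cB : IsSqCorner B v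

lemma StepDat.rotate {n m : ℕ} {A B v : Pt} (h : StepDat n m A B v) :
    StepDat n m (rot n A) (rot n B) (rot n v) :=
  ⟨rot_diagAdj h.adj, rot_corner h.cA, rot_corner h.cB⟩

lemma StepDat.flipped {n m : ℕ} {A B v : Pt} (h : StepDat n m A B v) :
    StepDat n m (flip m A) (flip m B) (flip m v) :=
  ⟨flip_diagAdj h.adj, flip_corner h.cA, flip_corner h.cB⟩

lemma StepDat.symm {n m : ℕ} {A B v : Pt} (h : StepDat n m A B v) : StepDat n m B A v := by
  obtain ⟨⟨h1, h2, h3, u, hu1, hu2⟩, c1, c2⟩ := h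
  exact ⟨⟨h2, h1, h3.symm, u, ⟨hu1.2, hu1.1⟩, fun y hy => hu2 y ⟨hy.2, hy.1⟩⟩, c2, c1⟩

end BishopAux
namespace BishopAux

variable {n m : ℕ}

lemma mk_ne0 {a b c d e f : ℤ} (h : a ≠ d) : (![a,b,c] : Pt) ≠ ![d,e,f] := by
  intro hh; exact h (by simpa using congrFun hh 0)

lemma mk_ne2 {a b c d e f : ℤ} (h : c ≠ f) : (![a,b,c] : Pt) ≠ ![d,e,f] := by
  intro hh; exact h (by simpa using congrFun hh 2)

lemma corner_easy {a b c d e f : ℤ} (h : Even d ∧ Even e ∧ Even f ∧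
    -1 ≤ d - a ∧ d - a ≤ 1 ∧ -1 ≤ e - b ∧ e - b ≤ 1 ∧ -1 ≤ f - c ∧ f - c ≤ 1) :
    IsSqCorner ![a,b,c] ![d,e,f] := by
  rw [corner_mk]
  obtain ⟨h1, h2, h3, h4⟩ := h
  refine ⟨⟨h1, h2, h3⟩, ?_, ?_, ?_⟩ <;> rw [sq1] <;> omega

/-- Standard uniqueness argument for the shared corner. -/
lemma corner_uniq {a1 b1 c1 a2 b2 c2 x y z : ℤ}
    (hx : ∀ u : ℤ, u % 2 = 0 → -1 ≤ u - a1 → u - a1 ≤ 1 → -1 ≤ u - a2 → u - a2 ≤ 1 → u = x)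
    (hy : ∀ u : ℤ, u % 2 = 0 → -1 ≤ u - b1 → u - b1 ≤ 1 → -1 ≤ u - b2 → u - b2 ≤ 1 → u = y)
    (hz : ∀ u : ℤ, u % 2 = 0 → -1 ≤ u - c1 → u - c1 ≤ 1 → -1 ≤ u - c2 → u - c2 ≤ 1 → u = z) :
    ∀ w : Pt, IsSqCorner ![a1,b1,c1] w → IsSqCorner ![a2,b2,c2] w → w = ![x,y,z] := by
  intro w h1 h2
  rw [corner_mk_iff] at h1 h2
  obtain ⟨⟨e0, e1, e2⟩, p0, p1, p2⟩ := h1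
  obtain ⟨-, q0, q1, q2⟩ := h2
  rw [sq1] at p0 p1 p2 q0 q1 q2
  rw [Int.even_iff] at e0 e1 e2
  funext j; fin_cases j
  · simpa using hx (w 0) e0 p0.1 p0.2 q0.1 q0.2
  · simpa using hy (w 1) e1 p1.1 p1.2 q1.1 q1.2
  · simpa using hz (w 2) e2 p2.1 p2.2 q2.1 q2.2

lemma mkStep {A B v : Pt} (hA : IsSurfSq n m A) (hB : IsSurfSq n m B) (hne : A ≠ B)
    (hvA : IsSqCorner A v) (hvB : IsSqCorner B v)
    (huniq : ∀ w, IsSqCorner A w → IsSqCorner B w → w = v) : StepDat n m A B v :=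
  ⟨⟨hA, hB, hne, v, ⟨hvA, hvB⟩, fun w hw => huniq w hw.1 hw.2⟩, hvA, hvB⟩

lemma step_flat_y0 (x z : ℤ) (hx : Odd x) (hz : Odd z) (h1 : 0 < x) (h2 : x + 2 < 2*(n:ℤ))
    (h3 : 0 < z) (h4 : z + 2 < 2*(m:ℤ)) :
    StepDat n m ![x,0,z] ![x+2,0,z+2] ![x+1,0,z+1] := by
  rw [Int.odd_iff] at hx hz
  refine mkStep ?_ ?_ (mk_ne0 (by omega)) ?_ ?_ ?_
  · rw [surf_mk_iff]
    exact ⟨by omega, Or.inr (Or.inl ⟨Or.inl rfl, by rw [Int.odd_iff]; omega, by rw [Int.odd_iff]; omega⟩)⟩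
  · rw [surf_mk_iff]
    exact ⟨by omega, Or.inr (Or.inl ⟨Or.inl rfl, by rw [Int.odd_iff]; omega, by rw [Int.odd_iff]; omega⟩)⟩
  · exact corner_easy (by simp only [Int.even_iff]; omega)
  · exact corner_easy (by simp only [Int.even_iff]; omega)
  · exact corner_uniq (fun u h p1 p2 q1 q2 => by omega) (fun u h p1 p2 q1 q2 => by omega)
      (fun u h p1 p2 q1 q2 => by omega)

lemma step_edge_y0 (z : ℤ) (hn : 0 < n) (hz : Odd z) (h3 : 0 < z) (h4 : z + 2 < 2*(m:ℤ)) :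
    StepDat n m ![2*(n:ℤ)-1,0,z] ![2*(n:ℤ),1,z+2] ![2*(n:ℤ),0,z+1] := by
  rw [Int.odd_iff] at hz
  refine mkStep ?_ ?_ (mk_ne0 (by omega)) ?_ ?_ ?_
  · rw [surf_mk_iff]
    exact ⟨by omega, Or.inr (Or.inl ⟨Or.inl rfl, by rw [Int.odd_iff]; omega, by rw [Int.odd_iff]; omega⟩)⟩
  · rw [surf_mk_iff]
    exact ⟨by omega, Or.inl ⟨Or.inr rfl, by rw [Int.odd_iff]; omega, by rw [Int.odd_iff]; omega⟩⟩
  · exact corner_easy (by simp only [Int.even_iff]; omega)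
  · exact corner_easy (by simp only [Int.even_iff]; omega)
  · exact corner_uniq (fun u h p1 p2 q1 q2 => by omega) (fun u h p1 p2 q1 q2 => by omega)
      (fun u h p1 p2 q1 q2 => by omega)

lemma step_cap (x y f : ℤ) (hx : Odd x) (hy : Odd y) (hf : f = 0 ∨ f = 2*(m:ℤ))
    (h1 : 0 < x) (h2 : x + 2 < 2*(n:ℤ)) (h3 : 0 < y) (h4 : y + 2 < 2*(n:ℤ)) :
    StepDat n m ![x,y,f] ![x+2,y+2,f] ![x+1,y+1,f] := by
  rw [Int.odd_iff] at hx hy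
  have hf' : f % 2 = 0 := by rcases hf with rfl | rfl <;> omega
  refine mkStep ?_ ?_ (mk_ne0 (by omega)) ?_ ?_ ?_
  · rw [surf_mk_iff]
    refine ⟨⟨by omega, by omega, by rcases hf with rfl | rfl <;> omega⟩,
      Or.inr (Or.inr ⟨?_, by rw [Int.odd_iff]; omega, by rw [Int.odd_iff]; omega⟩)⟩
    rcases hf with rfl | rfl
    · exact Or.inl rfl
    · exact Or.inr rfl
  · rw [surf_mk_iff]
    refine ⟨⟨by omega, by omega, by rcases hf with rfl | rfl <;> omega⟩,
      Or.inr (Or.inr ⟨?_, by rw [Int.odd_iff]; omega, by rw [Int.odd_iff]; omega⟩)⟩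
    rcases hf with rfl | rfl
    · exact Or.inl rfl
    · exact Or.inr rfl
  · exact corner_easy (by simp only [Int.even_iff]; omega)
  · exact corner_easy (by simp only [Int.even_iff]; omega)
  · exact corner_uniq (fun u h p1 p2 q1 q2 => by omega) (fun u h p1 p2 q1 q2 => by omega)
      (fun u h p1 p2 q1 q2 => by omega)

lemma step_enter_top (x : ℤ) (hx : Odd x) (h1 : 0 < x) (h2 : x + 2 < 2*(n:ℤ)) (hm : 0 < m) :
    StepDat n m ![x,0,2*(m:ℤ)-1] ![x+2,1,2*(m:ℤ)] ![x+1,0,2*(m:ℤ)] := by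
  rw [Int.odd_iff] at hx
  refine mkStep ?_ ?_ (mk_ne0 (by omega)) ?_ ?_ ?_
  · rw [surf_mk_iff]
    exact ⟨by omega, Or.inr (Or.inl ⟨Or.inl rfl, by rw [Int.odd_iff]; omega, by rw [Int.odd_iff]; omega⟩)⟩
  · rw [surf_mk_iff]
    exact ⟨by omega, Or.inr (Or.inr ⟨Or.inr rfl, by rw [Int.odd_iff]; omega, by rw [Int.odd_iff]; omega⟩)⟩
  · exact corner_easy (by simp only [Int.even_iff]; omega)
  · exact corner_easy (by simp only [Int.even_iff]; omega)
  · exact corner_uniq (fun u h p1 p2 q1 q2 => by omega) (fun u h p1 p2 q1 q2 => by omega)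
      (fun u h p1 p2 q1 q2 => by omega)

lemma step_exit_top (y : ℤ) (hy : Odd y) (h1 : 0 < y) (h2 : y + 2 < 2*(n:ℤ)) (hm : 0 < m) :
    StepDat n m ![2*(n:ℤ)-1,y,2*(m:ℤ)] ![2*(n:ℤ),y+2,2*(m:ℤ)-1] ![2*(n:ℤ),y+1,2*(m:ℤ)] := by
  rw [Int.odd_iff] at hy
  refine mkStep ?_ ?_ (mk_ne2 (by omega)) ?_ ?_ ?_
  · rw [surf_mk_iff]
    exact ⟨by omega, Or.inr (Or.inr ⟨Or.inr rfl, by rw [Int.odd_iff]; omega, by rw [Int.odd_iff]; omega⟩)⟩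
  · rw [surf_mk_iff]
    exact ⟨by omega, Or.inl ⟨Or.inr rfl, by rw [Int.odd_iff]; omega, by rw [Int.odd_iff]; omega⟩⟩
  · exact corner_easy (by simp only [Int.even_iff]; omega)
  · exact corner_easy (by simp only [Int.even_iff]; omega)
  · exact corner_uniq (fun u h p1 p2 q1 q2 => by omega) (fun u h p1 p2 q1 q2 => by omega)
      (fun u h p1 p2 q1 q2 => by omega)

end BishopAux
namespace BishopAux

variable {n m : ℕ}

lemma two_dvd_8n : (2:ℤ) ∣ 8*(n:ℤ) := ⟨4*n, by ring⟩
lemma twon_dvd_8n : (2*(n:ℤ)) ∣ 8*(n:ℤ) := ⟨4, by ring⟩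

lemma ch_mod (w z : ℤ) : ch n (w % (8*(n:ℤ))) z = ch n w z :=
  ch_congr n z (Int.emod_emod_of_dvd w dvd_rfl)

lemma capt_mod (f ω t : ℤ) : capt n f (ω % (8*(n:ℤ))) t = capt n f ω t :=
  capt_congr n f t (Int.emod_emod_of_dvd ω dvd_rfl)

lemma capc_mod (f ω t : ℤ) : capc n f (ω % (8*(n:ℤ))) t = capc n f ω t :=
  capc_congr n f t (Int.emod_emod_of_dvd ω dvd_rfl)

lemma ch_shift (w j z : ℤ) : ch n (w % (8*(n:ℤ)) + j) z = ch n (w + j) z :=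
  ch_congr n z (emod_shift _ w j).symm

lemma capt_shift (f ω j t : ℤ) : capt n f (ω % (8*(n:ℤ)) + j) t = capt n f (ω + j) t :=
  capt_congr n f t (emod_shift _ ω j).symm

lemma capc_shift (f ω j t : ℤ) : capc n f (ω % (8*(n:ℤ)) + j) t = capc n f (ω + j) t :=
  capc_congr n f t (emod_shift _ ω j).symm

lemma mod2_mod8n (w : ℤ) : (w % (8*(n:ℤ))) % 2 = w % 2 :=
  Int.emod_emod_of_dvd w two_dvd_8n

lemma mod2n_mod8n (w : ℤ) : (w % (8*(n:ℤ))) % (2*(n:ℤ)) = w % (2*(n:ℤ)) :=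
  Int.emod_emod_of_dvd w twon_dvd_8n

lemma mod2n_shift (w j : ℤ) : (w % (8*(n:ℤ)) + j) % (2*(n:ℤ)) = (w + j) % (2*(n:ℤ)) := by
  rw [← mod2n_mod8n (w := w % (8*(n:ℤ)) + j), ← emod_shift]
  exact mod2n_mod8n _

lemma mod2n_add2n (w : ℤ) : (w + 2*(n:ℤ)) % (2*(n:ℤ)) = w % (2*(n:ℤ)) := by
  rw [show w + 2*(n:ℤ) = w + 2*(n:ℤ)*1 by ring, Int.add_mul_emod_self_left]

lemma ch_base1 {w : ℤ} (z : ℤ) (h0 : 0 ≤ w) (h1 : w < 2*(n:ℤ)) : ch n w z = ![w, 0, z] := by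
  unfold ch; rw [Int.emod_eq_of_lt h0 (by omega), if_pos h1]

lemma ch_base2 {w : ℤ} (z : ℤ) (h0 : 2*(n:ℤ) ≤ w) (h1 : w < 4*(n:ℤ)) :
    ch n w z = ![2*(n:ℤ), w - 2*(n:ℤ), z] := by
  unfold ch; rw [Int.emod_eq_of_lt (by omega) (by omega), if_neg (by omega), if_pos h1]

lemma ch_base3 {w : ℤ} (z : ℤ) (h0 : 4*(n:ℤ) ≤ w) (h1 : w < 6*(n:ℤ)) :
    ch n w z = ![6*(n:ℤ) - w, 2*(n:ℤ), z] := by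
  unfold ch
  rw [Int.emod_eq_of_lt (by omega) (by omega), if_neg (by omega), if_neg (by omega), if_pos h1]

lemma ch_base4 {w : ℤ} (z : ℤ) (h0 : 6*(n:ℤ) ≤ w) (h1 : w < 8*(n:ℤ)) :
    ch n w z = ![0, 8*(n:ℤ) - w, z] := by
  unfold ch
  rw [Int.emod_eq_of_lt (by omega) (by omega), if_neg (by omega), if_neg (by omega),
    if_neg (by omega)]

lemma capt_base1 {ω : ℤ} (f t : ℤ) (h0 : 0 ≤ ω) (h1 : ω < 2*(n:ℤ)) :
    capt n f ω t = ![ω + 1 + 2*t, 1 + 2*t, f] := by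
  unfold capt; rw [Int.emod_eq_of_lt h0 (by omega), if_pos h1]

lemma capc_base1 {ω : ℤ} (f t : ℤ) (h0 : 0 ≤ ω) (h1 : ω < 2*(n:ℤ)) :
    capc n f ω t = ![ω + 2*t, 2*t, f] := by
  unfold capc; rw [Int.emod_eq_of_lt h0 (by omega), if_pos h1]

/-- Diagonal step on the side surface (possibly across a vertical edge), ascending. -/
lemma step_side (hn : 0 < n) (z : ℤ) (hz : z % 2 = 1) (h3 : 0 < z) (h4 : z + 2 < 2*(m:ℤ)) :
    ∀ w, w % 2 = 1 → StepDat n m (ch n w z) (ch n (w+2) (z+2)) (ch n (w+1) (z+1)) := by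
  apply lift_all hn
    (P := fun w => w % 2 = 1 → StepDat n m (ch n w z) (ch n (w+2) (z+2)) (ch n (w+1) (z+1)))
  · intro w h hw
    have h' := h (by rw [mod2_mod8n]; exact hw)
    rwa [ch_mod, ch_shift w 2 (z+2), ch_shift w 1 (z+1)] at h'
  · intro w h hw
    have h' := (h (by omega)).rotate
    have eB : ch n (w+2*(n:ℤ)+2) (z+2) = rot n (ch n (w+2) (z+2)) := by
      rw [show w+2*(n:ℤ)+2 = (w+2)+2*(n:ℤ) by ring]; exact ch_add_2n n hn _ _
    have eC : ch n (w+2*(n:ℤ)+1) (z+1) = rot n (ch n (w+1) (z+1)) := by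
      rw [show w+2*(n:ℤ)+1 = (w+1)+2*(n:ℤ) by ring]; exact ch_add_2n n hn _ _
    rw [ch_add_2n n hn w z, eB, eC]
    exact h'
  · intro w h0 h1 hw
    by_cases hww : w = 2*(n:ℤ)-1
    · subst hww
      rw [ch_base1 z (by omega) (by omega), ch_base2 (z+2) (by omega) (by omega),
        ch_base2 (z+1) (by omega) (by omega)]
      have eB : (![2*(n:ℤ), 2*(n:ℤ)-1+2-2*(n:ℤ), z+2] : Pt) = ![2*(n:ℤ), 1, z+2] :=
        vec_ext rfl (by ring) rfl
      have eC : (![2*(n:ℤ), 2*(n:ℤ)-1+1-2*(n:ℤ), z+1] : Pt) = ![2*(n:ℤ), 0, z+1] :=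
        vec_ext rfl (by ring) rfl
      rw [eB, eC]
      exact step_edge_y0 z hn (Int.odd_iff.mpr hz) h3 h4
    · rw [ch_base1 z h0 h1, ch_base1 (z+2) (by omega) (by omega),
        ch_base1 (z+1) (by omega) (by omega)]
      exact step_flat_y0 w z (Int.odd_iff.mpr hw) (Int.odd_iff.mpr hz) (by omega) (by omega) h3 h4

/-- Diagonal step on the side surface, descending. -/
lemma step_side_down (hn : 0 < n) (z : ℤ) (hz : z % 2 = 1) (h3 : 2 < z) (h4 : z < 2*(m:ℤ))
    (w : ℤ) (hw : w % 2 = 1) :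
    StepDat n m (ch n w z) (ch n (w+2) (z-2)) (ch n (w+1) (z-1)) := by
  have h := (step_side (n := n) (m := m) hn (2*(m:ℤ)-z) (by omega) (by omega) (by omega) w hw).flipped
  have eA : flip m (ch n w (2*(m:ℤ)-z)) = ch n w z := by rw [flip_ch]; congr 1; ring
  have eB : flip m (ch n (w+2) (2*(m:ℤ)-z+2)) = ch n (w+2) (z-2) := by
    rw [flip_ch]; congr 1; ring
  have eC : flip m (ch n (w+1) (2*(m:ℤ)-z+1)) = ch n (w+1) (z-1) := by
    rw [flip_ch]; congr 1; ring
  rwa [eA, eB, eC] at h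

/-- Entering the top cap from the side surface. -/
lemma step_enter (hn : 0 < n) (hm : 0 < m) :
    ∀ w, w % 2 = 1 → (w+1) % (2*(n:ℤ)) ≠ 0 →
      StepDat n m (ch n w (2*(m:ℤ)-1)) (capt n (2*(m:ℤ)) (w+1) 0) (capc n (2*(m:ℤ)) (w+1) 0) := by
  apply lift_all hn
    (P := fun w => w % 2 = 1 → (w+1) % (2*(n:ℤ)) ≠ 0 →
      StepDat n m (ch n w (2*(m:ℤ)-1)) (capt n (2*(m:ℤ)) (w+1) 0) (capc n (2*(m:ℤ)) (w+1) 0))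
  · intro w h hw hv
    have h' := h (by rw [mod2_mod8n]; exact hw) (by rwa [mod2n_shift])
    rwa [ch_mod, capt_shift _ w 1, capc_shift _ w 1] at h'
  · intro w h hw hv
    have h' := (h (by omega) (by rwa [show w+2*(n:ℤ)+1 = (w+1)+2*(n:ℤ) by ring,
      mod2n_add2n] at hv)).rotate
    have eB : capt n (2*(m:ℤ)) (w+2*(n:ℤ)+1) 0 = rot n (capt n (2*(m:ℤ)) (w+1) 0) := by
      rw [show w+2*(n:ℤ)+1 = (w+1)+2*(n:ℤ) by ring]; exact capt_add_2n n hn _ _ _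
    have eC : capc n (2*(m:ℤ)) (w+2*(n:ℤ)+1) 0 = rot n (capc n (2*(m:ℤ)) (w+1) 0) := by
      rw [show w+2*(n:ℤ)+1 = (w+1)+2*(n:ℤ) by ring]; exact capc_add_2n n hn _ _ _
    rw [ch_add_2n n hn, eB, eC]
    exact h'
  · intro w h0 h1 hw hv
    have hv2 : w + 1 ≠ 2*(n:ℤ) := by
      intro he; apply hv; rw [he]; exact Int.emod_self
    rw [ch_base1 _ h0 h1, capt_base1 _ _ (by omega) (by omega), capc_base1 _ _ (by omega) (by omega)]
    have eB : (![w+1+1+2*0, 1+2*0, 2*(m:ℤ)] : Pt) = ![w+2, 1, 2*(m:ℤ)] :=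
      vec_ext (by ring) (by ring) rfl
    have eC : (![w+1+2*0, 2*0, 2*(m:ℤ)] : Pt) = ![w+1, 0, 2*(m:ℤ)] :=
      vec_ext (by ring) (by ring) rfl
    rw [eB, eC]
    exact step_enter_top w (Int.odd_iff.mpr hw) (by omega) (by omega) hm

/-- A diagonal step inside a cap. -/
lemma step_capstep (hn : 0 < n) (f t : ℤ) (hf : f = 0 ∨ f = 2*(m:ℤ)) (ht : 0 ≤ t) :
    ∀ ω, ω % 2 = 0 → 0 < ω % (2*(n:ℤ)) → ω % (2*(n:ℤ)) + 2*t + 4 ≤ 2*(n:ℤ) →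
      StepDat n m (capt n f ω t) (capt n f ω (t+1)) (capc n f ω (t+1)) := by
  apply lift_all hn
    (P := fun ω => ω % 2 = 0 → 0 < ω % (2*(n:ℤ)) → ω % (2*(n:ℤ)) + 2*t + 4 ≤ 2*(n:ℤ) →
      StepDat n m (capt n f ω t) (capt n f ω (t+1)) (capc n f ω (t+1)))
  · intro ω h hw h1 h2
    have h' := h (by rw [mod2_mod8n]; exact hw) (by rwa [mod2n_mod8n]) (by rwa [mod2n_mod8n])
    rwa [capt_mod, capt_mod, capc_mod] at h'
  · intro ω h hw h1 h2
    rw [mod2n_add2n] at h1 h2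
    have h' := (h (by omega) h1 h2).rotate
    rw [capt_add_2n n hn, capt_add_2n n hn, capc_add_2n n hn]
    exact h'
  · intro ω h0 h1 hw hlt hle
    have e : ω % (2*(n:ℤ)) = ω := Int.emod_eq_of_lt h0 h1
    rw [e] at hlt hle
    rw [capt_base1 _ _ h0 h1, capt_base1 _ _ h0 h1, capc_base1 _ _ h0 h1]
    have eB : (![ω+1+2*(t+1), 1+2*(t+1), f] : Pt) = ![(ω+1+2*t)+2, (1+2*t)+2, f] :=
      vec_ext (by ring) (by ring) rfl
    have eC : (![ω+2*(t+1), 2*(t+1), f] : Pt) = ![(ω+1+2*t)+1, (1+2*t)+1, f] :=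
      vec_ext (by ring) (by ring) rfl
    rw [eB, eC]
    exact step_cap _ _ f (Int.odd_iff.mpr (by omega)) (Int.odd_iff.mpr (by omega)) hf
      (by omega) (by omega) (by omega) (by omega)

/-- Leaving the top cap onto the side surface, descending. -/
lemma step_exit (hn : 0 < n) (hm : 0 < m) (t : ℤ) (ht0 : 0 ≤ t) :
    ∀ ω, ω % 2 = 0 → 0 < ω % (2*(n:ℤ)) → ω % (2*(n:ℤ)) + 2*t + 2 = 2*(n:ℤ) →
      StepDat n m (capt n (2*(m:ℤ)) ω t)
        (ch n (ω - 2*(ω % (2*(n:ℤ))) + 4*(n:ℤ) + 1) (2*(m:ℤ)-1))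
        (capc n (2*(m:ℤ)) ω (t+1)) := by
  apply lift_all hn
    (P := fun ω => ω % 2 = 0 → 0 < ω % (2*(n:ℤ)) → ω % (2*(n:ℤ)) + 2*t + 2 = 2*(n:ℤ) →
      StepDat n m (capt n (2*(m:ℤ)) ω t)
        (ch n (ω - 2*(ω % (2*(n:ℤ))) + 4*(n:ℤ) + 1) (2*(m:ℤ)-1))
        (capc n (2*(m:ℤ)) ω (t+1)))
  · intro ω h hw h1 h2
    have h' := h (by rw [mod2_mod8n]; exact hw) (by rwa [mod2n_mod8n]) (by rwa [mod2n_mod8n])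
    rw [mod2n_mod8n] at h'
    rwa [capt_mod, capc_mod,
      show ω % (8*(n:ℤ)) - 2*(ω % (2*(n:ℤ))) + 4*(n:ℤ) + 1
        = ω % (8*(n:ℤ)) + (4*(n:ℤ) + 1 - 2*(ω % (2*(n:ℤ)))) by ring,
      ch_shift,
      show ω + (4*(n:ℤ) + 1 - 2*(ω % (2*(n:ℤ)))) = ω - 2*(ω % (2*(n:ℤ))) + 4*(n:ℤ) + 1 by ring]
      at h'
  · intro ω h hw h1 h2
    rw [mod2n_add2n] at h1 h2
    have h' := (h (by omega) h1 h2).rotate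
    rw [mod2n_add2n]
    rw [capt_add_2n n hn, capc_add_2n n hn,
      show ω + 2*(n:ℤ) - 2*(ω % (2*(n:ℤ))) + 4*(n:ℤ) + 1
        = (ω - 2*(ω % (2*(n:ℤ))) + 4*(n:ℤ) + 1) + 2*(n:ℤ) by ring,
      ch_add_2n n hn]
    exact h'
  · intro ω h0 h1 hw hlt hle
    have e : ω % (2*(n:ℤ)) = ω := Int.emod_eq_of_lt h0 h1
    rw [e] at hlt hle ⊢
    rw [capt_base1 _ _ h0 h1, capc_base1 _ _ h0 h1,
      ch_base2 _ (by omega) (by omega)]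
    have eA : (![ω+1+2*t, 1+2*t, 2*(m:ℤ)] : Pt) = ![2*(n:ℤ)-1, (2*(n:ℤ)-ω-1), 2*(m:ℤ)] :=
      vec_ext (by omega) (by omega) rfl
    have eB : (![2*(n:ℤ), ω - 2*ω + 4*(n:ℤ) + 1 - 2*(n:ℤ), 2*(m:ℤ)-1] : Pt)
        = ![2*(n:ℤ), (2*(n:ℤ)-ω-1)+2, 2*(m:ℤ)-1] := vec_ext rfl (by ring) rfl
    have eC : (![ω+2*(t+1), 2*(t+1), 2*(m:ℤ)] : Pt) = ![2*(n:ℤ), (2*(n:ℤ)-ω-1)+1, 2*(m:ℤ)] :=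
      vec_ext (by omega) (by omega) rfl
    rw [eA, eB, eC]
    exact step_exit_top _ (Int.odd_iff.mpr (by omega)) (by omega) (by omega) hm

/-- Entering the bottom cap (descending). -/
lemma step_enter_bot (hn : 0 < n) (hm : 0 < m) (w : ℤ) (hw : w % 2 = 1)
    (hv : (w+1) % (2*(n:ℤ)) ≠ 0) :
    StepDat n m (ch n w 1) (capt n 0 (w+1) 0) (capc n 0 (w+1) 0) := by
  have h := (step_enter hn hm w hw hv).flipped
  rwa [flip_ch, flip_capt, flip_capc, show 2*(m:ℤ) - (2*(m:ℤ)-1) = 1 by ring,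
    show 2*(m:ℤ) - 2*(m:ℤ) = 0 by ring] at h

/-- Leaving the bottom cap onto the side surface, ascending. -/
lemma step_exit_bot (hn : 0 < n) (hm : 0 < m) (t : ℤ) (ht0 : 0 ≤ t) (ω : ℤ)
    (h1 : ω % 2 = 0) (h2 : 0 < ω % (2*(n:ℤ))) (h3 : ω % (2*(n:ℤ)) + 2*t + 2 = 2*(n:ℤ)) :
    StepDat n m (capt n 0 ω t) (ch n (ω - 2*(ω % (2*(n:ℤ))) + 4*(n:ℤ) + 1) 1)
      (capc n 0 ω (t+1)) := by
  have h := (step_exit hn hm t ht0 ω h1 h2 h3).flipped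
  rwa [flip_ch, flip_capt, flip_capc, show 2*(m:ℤ) - (2*(m:ℤ)-1) = 1 by ring,
    show 2*(m:ℤ) - 2*(m:ℤ) = 0 by ring] at h

end BishopAux
namespace BishopAux

variable {n m : ℕ}

/-- Consecutive corner points along a side diagonal are at distance 8. -/
lemma d_side (hn : 0 < n) (z z' : ℤ) (hz : (z - z')^2 = 4) :
    ∀ a, a % 2 = 0 → dist2 (ch n a z) (ch n (a+2) z') = 8 := by
  apply lift_all hn (P := fun a => a % 2 = 0 → dist2 (ch n a z) (ch n (a+2) z') = 8)
  · intro a h ha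
    have h' := h (by rw [mod2_mod8n]; exact ha)
    rwa [ch_mod, ch_shift a 2] at h'
  · intro a h ha
    have h' := h (by omega)
    rw [ch_add_2n n hn, show a+2*(n:ℤ)+2 = (a+2)+2*(n:ℤ) by ring, ch_add_2n n hn, dist2_rot]
    exact h'
  · intro a h0 h1 ha
    by_cases hb : a + 2 < 2*(n:ℤ)
    · rw [ch_base1 _ h0 h1, ch_base1 _ (by omega) hb, dist2_mk]; linear_combination hz
    · have : a = 2*(n:ℤ) - 2 := by omega
      subst this
      rw [ch_base1 _ h0 h1, ch_base2 _ (by omega) (by omega), dist2_mk]; linear_combination hz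

lemma d_side_up (hn : 0 < n) (z a : ℤ) (ha : a % 2 = 0) :
    dist2 (ch n a z) (ch n (a+2) (z+2)) = 8 :=
  d_side hn z (z+2) (by ring) a ha

lemma d_side_down (hn : 0 < n) (z a : ℤ) (ha : a % 2 = 0) :
    dist2 (ch n a z) (ch n (a+2) (z-2)) = 8 :=
  d_side hn z (z-2) (by ring) a ha

/-- Consecutive corner points along a cap crossing are at distance 8. -/
lemma d_cap (hn : 0 < n) (f t : ℤ) :
    ∀ ω, dist2 (capc n f ω t) (capc n f ω (t+1)) = 8 := by
  apply lift_all hn (P := fun ω => dist2 (capc n f ω t) (capc n f ω (t+1)) = 8)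
  · intro ω h; rwa [capc_mod, capc_mod] at h
  · intro ω h; rw [capc_add_2n n hn, capc_add_2n n hn, dist2_rot]; exact h
  · intro ω h0 h1
    rw [capc_base1 _ _ h0 h1, capc_base1 _ _ h0 h1, dist2_mk]; ring

/-- The first corner point of a cap run is the boundary chart point. -/
lemma capc_zero (f ω : ℤ) : capc n f ω 0 = ch n ω f := by
  unfold capc ch
  split_ifs <;> exact vec_ext (by ring) (by ring) rfl

/-- The last corner point of a cap run is the exit boundary chart point. -/
lemma capc_exit (hn : 0 < n) (t : ℤ) :
    ∀ ω, 0 < ω % (2*(n:ℤ)) → ω % (2*(n:ℤ)) + 2*t = 2*(n:ℤ) → ∀ f,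
      capc n f ω t = ch n (ω - 2*(ω % (2*(n:ℤ))) + 4*(n:ℤ)) f := by
  apply lift_all hn (P := fun ω => 0 < ω % (2*(n:ℤ)) → ω % (2*(n:ℤ)) + 2*t = 2*(n:ℤ) → ∀ f,
      capc n f ω t = ch n (ω - 2*(ω % (2*(n:ℤ))) + 4*(n:ℤ)) f)
  · intro ω h h1 h2 f
    have h' := h (by rwa [mod2n_mod8n]) (by rwa [mod2n_mod8n]) f
    rw [mod2n_mod8n] at h'
    rwa [capc_mod,
      show ω % (8*(n:ℤ)) - 2*(ω % (2*(n:ℤ))) + 4*(n:ℤ)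
        = ω % (8*(n:ℤ)) + (4*(n:ℤ) - 2*(ω % (2*(n:ℤ)))) by ring,
      ch_shift,
      show ω + (4*(n:ℤ) - 2*(ω % (2*(n:ℤ)))) = ω - 2*(ω % (2*(n:ℤ))) + 4*(n:ℤ) by ring] at h'
  · intro ω h h1 h2 f
    rw [mod2n_add2n] at h1 h2
    have h' := h h1 h2 f
    rw [mod2n_add2n, capc_add_2n n hn,
      show ω + 2*(n:ℤ) - 2*(ω % (2*(n:ℤ))) + 4*(n:ℤ)
        = (ω - 2*(ω % (2*(n:ℤ))) + 4*(n:ℤ)) + 2*(n:ℤ) by ring,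
      ch_add_2n n hn, h']
  · intro ω h0 h1 hlt hle f
    have e : ω % (2*(n:ℤ)) = ω := Int.emod_eq_of_lt h0 h1
    rw [e] at hlt hle ⊢
    rw [capc_base1 _ _ h0 h1, ch_base2 _ (by omega) (by omega)]
    exact vec_ext (by omega) (by omega) rfl

/-- Chains of step data yield bishop moves. -/
lemma chain_bishop (L Q : ℕ → Pt) (a b : ℕ) (hab : a < b)
    (hstep : ∀ t, a ≤ t → t < b → StepDat n m (L t) (L (t+1)) (Q (t+1)))
    (hd : ∀ t, a < t → t < b → dist2 (Q t) (Q (t+1)) = 8) :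
    BishopMove n m (L a) (L b) := by
  refine ⟨b-a, fun i => L (a+i), fun i => Q (a+i+1), by omega, rfl, congrArg L (by omega), ?_, ?_⟩
  · intro i hi
    have h := hstep (a+i) (by omega) (by omega)
    exact ⟨h.adj, h.cA, h.cB⟩
  · intro i h1 h2
    have e : a + (i-1) + 1 = a + i := by omega
    show dist2 (Q (a+(i-1)+1)) (Q (a+i+1)) = 8
    rw [e]
    exact hd (a+i) (by omega) (by omega)

end BishopAux
namespace BishopAux

variable {n m : ℕ}

lemma ch_arg {a a' z z' : ℤ} (h1 : a = a') (h2 : z = z') : ch n a z = ch n a' z' := by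
  rw [h1, h2]

lemma capt_arg {f ω ω' t t' : ℤ} (h1 : ω = ω') (h2 : t = t') : capt n f ω t = capt n f ω' t' := by
  rw [h1, h2]

lemma capc_arg {f ω ω' t t' : ℤ} (h1 : ω = ω') (h2 : t = t') : capc n f ω t = capc n f ω' t' := by
  rw [h1, h2]

lemma emod_congr (D x y c : ℤ) (h : x = y + D*c) : x % D = y % D := by
  subst h; rw [Int.add_mul_emod_self_left]

/-- Half of a long closed diagonal: ascent, top-cap crossing, descent, bottom-cap crossing. -/
def HL (n m r : ℕ) (ω : ℤ) (τ : ℕ) : Pt :=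
  if τ < m then ch n (ω + 1 + 2*(τ:ℤ)) (1 + 2*(τ:ℤ))
  else if τ < m + (n - r) then capt n (2*(m:ℤ)) (ω + 2*(m:ℤ)) ((τ:ℤ) - (m:ℤ))
  else if τ < 2*m + (n - r) then
    ch n (ω + 2*(m:ℤ) - 4*(r:ℤ) + 4*(n:ℤ) + 1 + 2*((τ:ℤ) - (m:ℤ) - (n:ℤ) + (r:ℤ)))
         (2*(m:ℤ) - 1 - 2*((τ:ℤ) - (m:ℤ) - (n:ℤ) + (r:ℤ)))
  else capt n 0 (ω + 4*(m:ℤ) + 4*(n:ℤ) - 4*(r:ℤ)) ((τ:ℤ) - 2*(m:ℤ) - (n:ℤ) + (r:ℤ))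

/-- Corner points along half of a long closed diagonal. -/
def HQ (n m r : ℕ) (ω : ℤ) (τ : ℕ) : Pt :=
  if τ ≤ m then ch n (ω + 2*(τ:ℤ)) (2*(τ:ℤ))
  else if τ ≤ m + (n - r) then capc n (2*(m:ℤ)) (ω + 2*(m:ℤ)) ((τ:ℤ) - (m:ℤ))
  else if τ ≤ 2*m + (n - r) then
    ch n (ω + 2*(m:ℤ) - 4*(r:ℤ) + 4*(n:ℤ) + 2*((τ:ℤ) - (m:ℤ) - (n:ℤ) + (r:ℤ)))
         (2*(m:ℤ) - 2*((τ:ℤ) - (m:ℤ) - (n:ℤ) + (r:ℤ)))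
  else capc n 0 (ω + 4*(m:ℤ) + 4*(n:ℤ) - 4*(r:ℤ)) ((τ:ℤ) - 2*(m:ℤ) - (n:ℤ) + (r:ℤ))

section evals
variable (n m r : ℕ) (ω : ℤ)

lemma HL_eval1 (τ : ℕ) (a z : ℤ) (h : τ < m) (ha : a = ω + 1 + 2*(τ:ℤ)) (hz : z = 1 + 2*(τ:ℤ)) :
    HL n m r ω τ = ch n a z := by subst ha; subst hz; unfold HL; rw [if_pos h]

lemma HL_eval2 (τ : ℕ) (t : ℤ) (h1 : m ≤ τ) (h2 : τ < m + (n - r)) (ht : t = (τ:ℤ) - (m:ℤ)) :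
    HL n m r ω τ = capt n (2*(m:ℤ)) (ω + 2*(m:ℤ)) t := by
  subst ht; unfold HL; rw [if_neg (by omega), if_pos h2]

lemma HL_eval3 (τ : ℕ) (a z : ℤ) (h1 : m + (n - r) ≤ τ) (h2 : τ < 2*m + (n - r))
    (ha : a = ω + 2*(m:ℤ) - 4*(r:ℤ) + 4*(n:ℤ) + 1 + 2*((τ:ℤ) - (m:ℤ) - (n:ℤ) + (r:ℤ)))
    (hz : z = 2*(m:ℤ) - 1 - 2*((τ:ℤ) - (m:ℤ) - (n:ℤ) + (r:ℤ))) :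
    HL n m r ω τ = ch n a z := by
  subst ha; subst hz; unfold HL; rw [if_neg (by omega), if_neg (by omega), if_pos h2]

lemma HL_eval4 (τ : ℕ) (t : ℤ) (h1 : 2*m + (n - r) ≤ τ) (ht : t = (τ:ℤ) - 2*(m:ℤ) - (n:ℤ) + (r:ℤ)) :
    HL n m r ω τ = capt n 0 (ω + 4*(m:ℤ) + 4*(n:ℤ) - 4*(r:ℤ)) t := by
  subst ht; unfold HL; rw [if_neg (by omega), if_neg (by omega), if_neg (by omega)]

lemma HQ_eval1 (τ : ℕ) (a z : ℤ) (h : τ ≤ m) (ha : a = ω + 2*(τ:ℤ)) (hz : z = 2*(τ:ℤ)) :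
    HQ n m r ω τ = ch n a z := by subst ha; subst hz; unfold HQ; rw [if_pos h]

lemma HQ_eval2 (τ : ℕ) (t : ℤ) (h1 : m < τ) (h2 : τ ≤ m + (n - r)) (ht : t = (τ:ℤ) - (m:ℤ)) :
    HQ n m r ω τ = capc n (2*(m:ℤ)) (ω + 2*(m:ℤ)) t := by
  subst ht; unfold HQ; rw [if_neg (by omega), if_pos h2]

lemma HQ_eval3 (τ : ℕ) (a z : ℤ) (h1 : m + (n - r) < τ) (h2 : τ ≤ 2*m + (n - r))
    (ha : a = ω + 2*(m:ℤ) - 4*(r:ℤ) + 4*(n:ℤ) + 2*((τ:ℤ) - (m:ℤ) - (n:ℤ) + (r:ℤ)))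
    (hz : z = 2*(m:ℤ) - 2*((τ:ℤ) - (m:ℤ) - (n:ℤ) + (r:ℤ))) :
    HQ n m r ω τ = ch n a z := by
  subst ha; subst hz; unfold HQ; rw [if_neg (by omega), if_neg (by omega), if_pos h2]

lemma HQ_eval4 (τ : ℕ) (t : ℤ) (h1 : 2*m + (n - r) < τ) (ht : t = (τ:ℤ) - 2*(m:ℤ) - (n:ℤ) + (r:ℤ)) :
    HQ n m r ω τ = capc n 0 (ω + 4*(m:ℤ) + 4*(n:ℤ) - 4*(r:ℤ)) t := by
  subst ht; unfold HQ; rw [if_neg (by omega), if_neg (by omega), if_neg (by omega)]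

end evals

section halfstep

variable (hn : 0 < n) (hm0 : 0 < m) {r : ℕ} (hr0 : 0 < r) (hrn : r < n)
  (h2m : ∃ c : ℤ, 2*(m:ℤ) = 2*(n:ℤ)*c) {ω : ℤ} (hω2 : ω % 2 = 0)
  (hωr : ω % (2*(n:ℤ)) = 2*(r:ℤ))

include hn hm0 hr0 hrn h2m hω2 hωr

lemma f1_lem : (ω + 2*(m:ℤ)) % (2*(n:ℤ)) = 2*(r:ℤ) := by
  obtain ⟨c, hc⟩ := h2m
  rw [show ω + 2*(m:ℤ) = ω + 2*(n:ℤ)*c by linear_combination hc, Int.add_mul_emod_self_left, hωr]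

lemma f2_lem : (ω + 4*(m:ℤ) + 4*(n:ℤ) - 4*(r:ℤ)) % (2*(n:ℤ)) = 2*(n:ℤ) - 2*(r:ℤ) := by
  obtain ⟨c, hc⟩ := h2m
  have hdiv := Int.mul_ediv_add_emod ω (2*(n:ℤ))
  rw [hωr] at hdiv
  rw [show ω + 4*(m:ℤ) + 4*(n:ℤ) - 4*(r:ℤ)
      = (2*(n:ℤ) - 2*(r:ℤ)) + 2*(n:ℤ)*(ω/(2*(n:ℤ)) + 2*c + 1) by linear_combination 2*hc - hdiv,
    Int.add_mul_emod_self_left, Int.emod_eq_of_lt (by omega) (by omega)]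

lemma HL_step : ∀ τ : ℕ, τ + 1 < 2*m + n →
    StepDat n m (HL n m r ω τ) (HL n m r ω (τ+1)) (HQ n m r ω (τ+1)) := by
  have f1 := f1_lem hn hm0 hr0 hrn h2m hω2 hωr
  have f2 := f2_lem hn hm0 hr0 hrn h2m hω2 hωr
  intro τ hτ
  by_cases c1 : τ + 1 < m
  · rw [HL_eval1 n m r ω τ (ω+1+2*(τ:ℤ)) (1+2*(τ:ℤ)) (by omega) rfl rfl,
      HL_eval1 n m r ω (τ+1) ((ω+1+2*(τ:ℤ))+2) ((1+2*(τ:ℤ))+2) (by omega) (by push_cast; try ring)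
        (by push_cast; try ring),
      HQ_eval1 n m r ω (τ+1) ((ω+1+2*(τ:ℤ))+1) ((1+2*(τ:ℤ))+1) (by omega) (by push_cast; try ring)
        (by push_cast; try ring)]
    exact step_side hn _ (by omega) (by omega) (by push_cast; omega) _ (by omega)
  by_cases c2 : τ + 1 = m
  · have h := step_enter (n := n) (m := m) hn hm0 (ω+2*(m:ℤ)-1) (by omega)
      (by rw [show ω+2*(m:ℤ)-1+1 = ω+2*(m:ℤ) by ring, f1]; omega)
    rw [show ω+2*(m:ℤ)-1+1 = ω+2*(m:ℤ) by ring, capc_zero] at h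
    rw [HL_eval1 n m r ω τ (ω+2*(m:ℤ)-1) (2*(m:ℤ)-1) (by omega) (by push_cast; omega)
        (by push_cast; omega),
      HL_eval2 n m r ω (τ+1) 0 (by omega) (by omega) (by push_cast; omega),
      HQ_eval1 n m r ω (τ+1) (ω+2*(m:ℤ)) (2*(m:ℤ)) (by omega) (by push_cast; omega)
        (by push_cast; omega)]
    exact h
  by_cases c3 : τ + 1 < m + (n - r)
  · have h := step_capstep (n := n) (m := m) hn (2*(m:ℤ)) ((τ:ℤ)-(m:ℤ)) (Or.inr rfl)
      (by push_cast; omega) (ω+2*(m:ℤ)) (by omega) (by rw [f1]; omega)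
      (by rw [f1]; push_cast; omega)
    rw [HL_eval2 n m r ω τ ((τ:ℤ)-(m:ℤ)) (by omega) (by omega) rfl,
      HL_eval2 n m r ω (τ+1) ((τ:ℤ)-(m:ℤ)+1) (by omega) (by omega) (by push_cast; try ring),
      HQ_eval2 n m r ω (τ+1) ((τ:ℤ)-(m:ℤ)+1) (by omega) (by omega) (by push_cast; try ring)]
    exact h
  by_cases c4 : τ + 1 = m + (n - r)
  · have h := step_exit (n := n) (m := m) hn hm0 ((τ:ℤ)-(m:ℤ)) (by push_cast; omega)
      (ω+2*(m:ℤ)) (by omega) (by rw [f1]; omega) (by rw [f1]; push_cast; omega)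
    rw [f1] at h
    rw [HL_eval2 n m r ω τ ((τ:ℤ)-(m:ℤ)) (by omega) (by omega) rfl,
      HL_eval3 n m r ω (τ+1) (ω+2*(m:ℤ) - 2*(2*(r:ℤ)) + 4*(n:ℤ) + 1) (2*(m:ℤ)-1)
        (by omega) (by omega) (by push_cast; omega) (by push_cast; omega),
      HQ_eval2 n m r ω (τ+1) ((τ:ℤ)-(m:ℤ)+1) (by omega) (by omega) (by push_cast; try ring)]
    exact h
  by_cases c5 : τ + 1 < 2*m + (n - r)
  · have h := step_side_down (n := n) (m := m) hn
      (2*(m:ℤ) - 1 - 2*((τ:ℤ) - (m:ℤ) - (n:ℤ) + (r:ℤ))) (by omega) (by push_cast; omega)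
      (by push_cast; omega)
      (ω + 2*(m:ℤ) - 4*(r:ℤ) + 4*(n:ℤ) + 1 + 2*((τ:ℤ) - (m:ℤ) - (n:ℤ) + (r:ℤ))) (by omega)
    rw [HL_eval3 n m r ω τ _ _ (by omega) (by omega) rfl rfl,
      HL_eval3 n m r ω (τ+1)
        ((ω + 2*(m:ℤ) - 4*(r:ℤ) + 4*(n:ℤ) + 1 + 2*((τ:ℤ) - (m:ℤ) - (n:ℤ) + (r:ℤ)))+2)
        ((2*(m:ℤ) - 1 - 2*((τ:ℤ) - (m:ℤ) - (n:ℤ) + (r:ℤ)))-2)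
        (by omega) (by omega) (by push_cast; try ring) (by push_cast; try ring),
      HQ_eval3 n m r ω (τ+1)
        ((ω + 2*(m:ℤ) - 4*(r:ℤ) + 4*(n:ℤ) + 1 + 2*((τ:ℤ) - (m:ℤ) - (n:ℤ) + (r:ℤ)))+1)
        ((2*(m:ℤ) - 1 - 2*((τ:ℤ) - (m:ℤ) - (n:ℤ) + (r:ℤ)))-1)
        (by omega) (by omega) (by push_cast; try ring) (by push_cast; try ring)]
    exact h
  by_cases c6 : τ + 1 = 2*m + (n - r)
  · have h := step_enter_bot (n := n) (m := m) hn hm0 (ω+4*(m:ℤ)+4*(n:ℤ)-4*(r:ℤ)-1) (by omega)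
      (by rw [show ω+4*(m:ℤ)+4*(n:ℤ)-4*(r:ℤ)-1+1 = ω+4*(m:ℤ)+4*(n:ℤ)-4*(r:ℤ) by ring, f2]; omega)
    rw [show ω+4*(m:ℤ)+4*(n:ℤ)-4*(r:ℤ)-1+1 = ω+4*(m:ℤ)+4*(n:ℤ)-4*(r:ℤ) by ring, capc_zero] at h
    rw [HL_eval3 n m r ω τ (ω+4*(m:ℤ)+4*(n:ℤ)-4*(r:ℤ)-1) 1 (by omega) (by omega)
        (by push_cast; omega) (by push_cast; omega),
      HL_eval4 n m r ω (τ+1) 0 (by omega) (by push_cast; omega),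
      HQ_eval3 n m r ω (τ+1) (ω+4*(m:ℤ)+4*(n:ℤ)-4*(r:ℤ)) 0 (by omega) (by omega)
        (by push_cast; omega) (by push_cast; omega)]
    exact h
  · have h := step_capstep (n := n) (m := m) hn 0 ((τ:ℤ)-2*(m:ℤ)-(n:ℤ)+(r:ℤ)) (Or.inl rfl)
      (by push_cast; omega) (ω+4*(m:ℤ)+4*(n:ℤ)-4*(r:ℤ)) (by omega) (by rw [f2]; omega)
      (by rw [f2]; push_cast; omega)
    rw [HL_eval4 n m r ω τ _ (by omega) rfl,
      HL_eval4 n m r ω (τ+1) (((τ:ℤ)-2*(m:ℤ)-(n:ℤ)+(r:ℤ))+1) (by omega) (by push_cast; try ring),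
      HQ_eval4 n m r ω (τ+1) (((τ:ℤ)-2*(m:ℤ)-(n:ℤ)+(r:ℤ))+1) (by omega) (by push_cast; try ring)]
    exact h

lemma HL_last (h8 : ∃ c : ℤ, 4*(m:ℤ) = 8*(n:ℤ)*c) :
    StepDat n m (HL n m r ω (2*m+n-1)) (HL n m r (ω+4*(n:ℤ)) 0) (HQ n m r ω (2*m+n)) := by
  have f2 := f2_lem hn hm0 hr0 hrn h2m hω2 hωr
  obtain ⟨c8, hc8⟩ := h8
  have h := step_exit_bot (n := n) (m := m) hn hm0 ((r:ℤ)-1) (by omega)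
    (ω+4*(m:ℤ)+4*(n:ℤ)-4*(r:ℤ)) (by omega) (by rw [f2]; omega) (by rw [f2]; ring)
  rw [f2] at h
  rw [show ω+4*(m:ℤ)+4*(n:ℤ)-4*(r:ℤ) - 2*(2*(n:ℤ)-2*(r:ℤ)) + 4*(n:ℤ) + 1
      = (ω+4*(n:ℤ)+1) + 8*(n:ℤ)*c8 by linear_combination hc8,
    ch_congr n 1 (emod_congr (8*(n:ℤ)) _ (ω+4*(n:ℤ)+1) c8 rfl)] at h
  rw [HL_eval4 n m r ω (2*m+n-1) ((r:ℤ)-1) (by omega) (by push_cast; omega),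
    HL_eval1 n m r (ω+4*(n:ℤ)) 0 (ω+4*(n:ℤ)+1) 1 (by omega) (by push_cast; try ring)
      (by push_cast; try ring),
    HQ_eval4 n m r ω (2*m+n) ((r:ℤ)-1+1) (by omega) (by push_cast; omega)]
  exact h

lemma HQ_d : ∀ τ : ℕ, τ + 1 ≤ 2*m + n → dist2 (HQ n m r ω τ) (HQ n m r ω (τ+1)) = 8 := by
  have f1 := f1_lem hn hm0 hr0 hrn h2m hω2 hωr
  have f2 := f2_lem hn hm0 hr0 hrn h2m hω2 hωr
  intro τ hτ
  by_cases c1 : τ + 1 ≤ m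
  · rw [HQ_eval1 n m r ω τ (ω+2*(τ:ℤ)) (2*(τ:ℤ)) (by omega) rfl rfl,
      HQ_eval1 n m r ω (τ+1) ((ω+2*(τ:ℤ))+2) ((2*(τ:ℤ))+2) (by omega) (by push_cast; try ring)
        (by push_cast; try ring)]
    exact d_side_up hn _ _ (by omega)
  by_cases c2 : τ + 1 ≤ m + (n - r)
  · have e2 : HQ n m r ω (τ+1) = capc n (2*(m:ℤ)) (ω+2*(m:ℤ)) (((τ:ℤ)-(m:ℤ))+1) :=
      HQ_eval2 n m r ω (τ+1) _ (by omega) (by omega) (by push_cast; try ring)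
    rw [e2]
    by_cases cm : τ = m
    · rw [HQ_eval1 n m r ω τ (ω+2*(m:ℤ)) (2*(m:ℤ)) (by omega) (by rw [cm])
        (by rw [cm]), ← capc_zero,
        show ((0:ℤ)) = (τ:ℤ)-(m:ℤ) by omega]
      exact d_cap hn _ _ _
    · rw [HQ_eval2 n m r ω τ ((τ:ℤ)-(m:ℤ)) (by omega) (by omega) rfl]
      exact d_cap hn _ _ _
  by_cases c3 : τ + 1 ≤ 2*m + (n - r)
  · have e2 : HQ n m r ω (τ+1)
        = ch n ((ω + 2*(m:ℤ) - 4*(r:ℤ) + 4*(n:ℤ) + 2*((τ:ℤ) - (m:ℤ) - (n:ℤ) + (r:ℤ)))+2)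
            ((2*(m:ℤ) - 2*((τ:ℤ) - (m:ℤ) - (n:ℤ) + (r:ℤ)))-2) :=
      HQ_eval3 n m r ω (τ+1) _ _ (by omega) (by omega) (by push_cast; try ring) (by push_cast; try ring)
    rw [e2]
    by_cases cm : τ = m + (n - r)
    · have e1 : HQ n m r ω τ = capc n (2*(m:ℤ)) (ω+2*(m:ℤ)) ((n:ℤ)-(r:ℤ)) :=
        HQ_eval2 n m r ω τ _ (by omega) (by omega) (by push_cast; omega)
      rw [e1, capc_exit hn _ _ (by rw [f1]; omega) (by rw [f1]; ring) _, f1]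
      rw [ch_arg (show ω + 2*(m:ℤ) - 2*(2*(r:ℤ)) + 4*(n:ℤ)
          = ω + 2*(m:ℤ) - 4*(r:ℤ) + 4*(n:ℤ) + 2*((τ:ℤ) - (m:ℤ) - (n:ℤ) + (r:ℤ)) by push_cast; omega)
        (show (2*(m:ℤ)) = 2*(m:ℤ) - 2*((τ:ℤ) - (m:ℤ) - (n:ℤ) + (r:ℤ)) by push_cast; omega)]
      exact d_side_down hn _ _ (by omega)
    · rw [HQ_eval3 n m r ω τ _ _ (by omega) (by omega) rfl rfl]
      exact d_side_down hn _ _ (by omega)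
  · have e2 : HQ n m r ω (τ+1) = capc n 0 (ω+4*(m:ℤ)+4*(n:ℤ)-4*(r:ℤ)) (((τ:ℤ)-2*(m:ℤ)-(n:ℤ)+(r:ℤ))+1) :=
      HQ_eval4 n m r ω (τ+1) _ (by omega) (by push_cast; try ring)
    rw [e2]
    by_cases cm : τ = 2*m + (n - r)
    · rw [HQ_eval3 n m r ω τ (ω+4*(m:ℤ)+4*(n:ℤ)-4*(r:ℤ)) 0 (by omega) (by omega)
        (by push_cast; omega) (by push_cast; omega), ← capc_zero,
        show ((0:ℤ)) = (τ:ℤ)-2*(m:ℤ)-(n:ℤ)+(r:ℤ) by push_cast; omega]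
      exact d_cap hn _ _ _
    · rw [HQ_eval4 n m r ω τ _ (by omega) rfl]
      exact d_cap hn _ _ _

lemma HQ_dlast (h8 : ∃ c : ℤ, 4*(m:ℤ) = 8*(n:ℤ)*c) :
    dist2 (HQ n m r ω (2*m+n)) (HQ n m r (ω+4*(n:ℤ)) 1) = 8 := by
  have f2 := f2_lem hn hm0 hr0 hrn h2m hω2 hωr
  obtain ⟨c8, hc8⟩ := h8
  have e1 : HQ n m r ω (2*m+n) = ch n (ω+4*(n:ℤ)) 0 := by
    rw [HQ_eval4 n m r ω (2*m+n) (r:ℤ) (by omega) (by push_cast; omega),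
      capc_exit hn _ _ (by rw [f2]; omega) (by rw [f2]; ring) _, f2,
      show ω+4*(m:ℤ)+4*(n:ℤ)-4*(r:ℤ) - 2*(2*(n:ℤ)-2*(r:ℤ)) + 4*(n:ℤ)
        = (ω+4*(n:ℤ)) + 8*(n:ℤ)*c8 by linear_combination hc8,
      ch_congr n 0 (emod_congr (8*(n:ℤ)) _ (ω+4*(n:ℤ)) c8 rfl)]
  rw [e1, HQ_eval1 n m r (ω+4*(n:ℤ)) 1 ((ω+4*(n:ℤ))+2) 2 (by omega) (by push_cast; try ring)
    (by push_cast; try ring)]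
  have := d_side_up (n := n) hn (0:ℤ) (ω+4*(n:ℤ)) (by omega)
  rw [show (0:ℤ)+2 = 2 by ring] at this
  exact this

end halfstep

end BishopAux
namespace BishopAux

variable {n m : ℕ}

/-- The long closed diagonal with label `g`. -/
def CL (n m g : ℕ) (t : ℕ) : Pt :=
  if t < 2*m+n then HL n m (g % n) (2*(g:ℤ)) t
  else HL n m (g % n) (2*(g:ℤ)+4*(n:ℤ)) (t - (2*m+n))

def CQ (n m g : ℕ) (t : ℕ) : Pt :=
  if t ≤ 2*m+n then HQ n m (g % n) (2*(g:ℤ)) t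
  else HQ n m (g % n) (2*(g:ℤ)+4*(n:ℤ)) (t - (2*m+n))

lemma CL_eval1 (g t : ℕ) (h : t < 2*m+n) : CL n m g t = HL n m (g % n) (2*(g:ℤ)) t := if_pos h

lemma CL_eval2 (g t : ℕ) (h : ¬ t < 2*m+n) (τ : ℕ) (hτ : τ = t - (2*m+n)) :
    CL n m g t = HL n m (g % n) (2*(g:ℤ)+4*(n:ℤ)) τ := by subst hτ; exact if_neg h

lemma CQ_eval1 (g t : ℕ) (h : t ≤ 2*m+n) : CQ n m g t = HQ n m (g % n) (2*(g:ℤ)) t := if_pos h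

lemma CQ_eval2 (g t : ℕ) (h : ¬ t ≤ 2*m+n) (τ : ℕ) (hτ : τ = t - (2*m+n)) :
    CQ n m g t = HQ n m (g % n) (2*(g:ℤ)+4*(n:ℤ)) τ := by subst hτ; exact if_neg h

section Cloops

variable (hn : 0 < n) (hm0 : 0 < m) {g : ℕ} (hg1 : 1 ≤ g) (hg2 : g ≤ 2*n-1) (hgn : g ≠ n)
  (h2m : ∃ c : ℤ, 2*(m:ℤ) = 2*(n:ℤ)*c) (h8 : ∃ c : ℤ, 4*(m:ℤ) = 8*(n:ℤ)*c)

include hn hm0 hg1 hg2 hgn h2m h8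

lemma hr0_lem : 0 < g % n := by
  refine Nat.pos_of_ne_zero fun h => ?_
  obtain ⟨c, rfl⟩ := Nat.dvd_of_mod_eq_zero h
  rcases Nat.lt_or_ge c 2 with hc | hc
  · interval_cases c <;> omega
  · have : 2*n ≤ n*c := by nlinarith
    omega

lemma hrn_lem : g % n < n := Nat.mod_lt _ hn

lemma hωr_lem : (2*(g:ℤ)) % (2*(n:ℤ)) = 2*((g % n : ℕ):ℤ) := by
  rcases Nat.lt_or_ge g n with h | h
  · rw [Nat.mod_eq_of_lt h, Int.emod_eq_of_lt (by omega) (by omega)]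
  · rw [Nat.mod_eq_sub_mod h, Nat.mod_eq_of_lt (by omega),
      show 2*(g:ℤ) = 2*((g:ℤ)-(n:ℤ)) + 2*(n:ℤ)*1 by ring, Int.add_mul_emod_self_left,
      Int.emod_eq_of_lt (by push_cast; omega) (by push_cast; omega)]
    push_cast; omega

lemma hωr2_lem : (2*(g:ℤ)+4*(n:ℤ)) % (2*(n:ℤ)) = 2*((g % n : ℕ):ℤ) := by
  rw [show 2*(g:ℤ)+4*(n:ℤ) = 2*(g:ℤ)+2*(n:ℤ)+2*(n:ℤ) by ring, mod2n_add2n, mod2n_add2n]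
  exact hωr_lem hn hm0 hg1 hg2 hgn h2m h8

lemma CL_step : ∀ t : ℕ, t + 1 < 4*m+2*n →
    StepDat n m (CL n m g t) (CL n m g (t+1)) (CQ n m g (t+1)) := by
  have hr0 := hr0_lem hn hm0 hg1 hg2 hgn h2m h8
  have hrn := hrn_lem hn hm0 hg1 hg2 hgn h2m h8
  have hw1 := hωr_lem hn hm0 hg1 hg2 hgn h2m h8
  have hw2 := hωr2_lem hn hm0 hg1 hg2 hgn h2m h8
  intro t ht
  by_cases c1 : t + 1 < 2*m+n
  · rw [CL_eval1 g t (by omega), CL_eval1 g (t+1) (by omega), CQ_eval1 g (t+1) (by omega)]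
    exact HL_step hn hm0 hr0 hrn h2m (by omega) hw1 t (by omega)
  by_cases c2 : t + 1 = 2*m+n
  · rw [CL_eval1 g t (by omega), CL_eval2 g (t+1) (by omega) 0 (by omega),
      CQ_eval1 g (t+1) (by omega), c2, show t = 2*m+n-1 by omega]
    exact HL_last hn hm0 hr0 hrn h2m (by omega) hw1 h8
  · rw [CL_eval2 g t (by omega) (t-(2*m+n)) rfl,
      CL_eval2 g (t+1) (by omega) ((t-(2*m+n))+1) (by omega),
      CQ_eval2 g (t+1) (by omega) ((t-(2*m+n))+1) (by omega)]
    exact HL_step hn hm0 hr0 hrn h2m (by omega) hw2 _ (by omega)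

lemma CQ_d : ∀ t : ℕ, t + 1 < 4*m+2*n → dist2 (CQ n m g t) (CQ n m g (t+1)) = 8 := by
  have hr0 := hr0_lem hn hm0 hg1 hg2 hgn h2m h8
  have hrn := hrn_lem hn hm0 hg1 hg2 hgn h2m h8
  have hw1 := hωr_lem hn hm0 hg1 hg2 hgn h2m h8
  have hw2 := hωr2_lem hn hm0 hg1 hg2 hgn h2m h8
  intro t ht
  by_cases c1 : t + 1 ≤ 2*m+n
  · rw [CQ_eval1 g t (by omega), CQ_eval1 g (t+1) (by omega)]
    exact HQ_d hn hm0 hr0 hrn h2m (by omega) hw1 t (by omega)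
  by_cases c2 : t = 2*m+n
  · rw [CQ_eval1 g t (by omega), CQ_eval2 g (t+1) (by omega) 1 (by omega), c2]
    exact HQ_dlast hn hm0 hr0 hrn h2m (by omega) hw1 h8
  · rw [CQ_eval2 g t (by omega) (t-(2*m+n)) rfl,
      CQ_eval2 g (t+1) (by omega) ((t-(2*m+n))+1) (by omega)]
    exact HQ_d hn hm0 hr0 hrn h2m (by omega) hw2 _ (by omega)

lemma C_clique : ∀ a b : ℕ, a < b → b < 4*m+2*n → BishopMove n m (CL n m g a) (CL n m g b) := by
  intro a b hab hb
  exact chain_bishop (CL n m g) (CQ n m g) a b hab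
    (fun t h1 h2 => CL_step hn hm0 hg1 hg2 hgn h2m h8 t (by omega))
    (fun t h1 h2 => CQ_d hn hm0 hg1 hg2 hgn h2m h8 t (by omega))

end Cloops

/-- The main diagonals of the caps. -/
def ALm (f : ℤ) (t : ℕ) : Pt := ![2*(t:ℤ)+1, 2*(t:ℤ)+1, f]
def ALa (n : ℕ) (f : ℤ) (t : ℕ) : Pt := ![2*(n:ℤ)-1-2*(t:ℤ), 2*(t:ℤ)+1, f]
def AQm (f : ℤ) (t : ℕ) : Pt := ![2*(t:ℤ), 2*(t:ℤ), f]
def AQa (n : ℕ) (f : ℤ) (t : ℕ) : Pt := ![2*(n:ℤ)-2*(t:ℤ), 2*(t:ℤ), f]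

lemma ALm_step (f : ℤ) (hf : f = 0 ∨ f = 2*(m:ℤ)) (t : ℕ) (ht : t + 1 < n) :
    StepDat n m (ALm f t) (ALm f (t+1)) (AQm f (t+1)) := by
  have h := step_cap (n := n) (m := m) (2*(t:ℤ)+1) (2*(t:ℤ)+1) f
    (Int.odd_iff.mpr (by omega)) (Int.odd_iff.mpr (by omega)) hf
    (by omega) (by omega) (by omega) (by omega)
  show StepDat n m ![2*(t:ℤ)+1, 2*(t:ℤ)+1, f] ![2*((t+1:ℕ):ℤ)+1, 2*((t+1:ℕ):ℤ)+1, f]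
    ![2*((t+1:ℕ):ℤ), 2*((t+1:ℕ):ℤ), f]
  rw [vec_ext (show 2*((t+1:ℕ):ℤ)+1 = (2*(t:ℤ)+1)+2 by push_cast; ring)
      (show 2*((t+1:ℕ):ℤ)+1 = (2*(t:ℤ)+1)+2 by push_cast; ring) rfl,
    vec_ext (show 2*((t+1:ℕ):ℤ) = (2*(t:ℤ)+1)+1 by push_cast; ring)
      (show 2*((t+1:ℕ):ℤ) = (2*(t:ℤ)+1)+1 by push_cast; ring) rfl]
  exact h

lemma ALa_step (f : ℤ) (hf : f = 0 ∨ f = 2*(m:ℤ)) (t : ℕ) (ht : t + 1 < n) :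
    StepDat n m (ALa n f t) (ALa n f (t+1)) (AQa n f (t+1)) := by
  have h := (ALm_step (n := n) (m := m) f hf t ht).rotate
  have e1 : ∀ s : ℕ, rot n (ALm f s) = ALa n f s := by
    intro s; unfold ALm ALa; rw [rot_mk]; exact vec_ext (by ring) rfl rfl
  have e2 : ∀ s : ℕ, rot n (AQm f s) = AQa n f s := by
    intro s; unfold AQm AQa; rw [rot_mk]
  rwa [e1, e1, e2] at h

lemma AQm_d (f : ℤ) (t : ℕ) : dist2 (AQm f t) (AQm f (t+1)) = 8 := by
  unfold AQm; rw [dist2_mk]; push_cast; ring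

lemma AQa_d (f : ℤ) (t : ℕ) : dist2 (AQa n f t) (AQa n f (t+1)) = 8 := by
  unfold AQa; rw [dist2_mk]; push_cast; ring

lemma Am_clique (f : ℤ) (hf : f = 0 ∨ f = 2*(m:ℤ)) : ∀ a b : ℕ, a < b → b < n →
    BishopMove n m (ALm f a) (ALm f b) := fun a b hab hb =>
  chain_bishop (ALm f) (AQm f) a b hab (fun t h1 h2 => ALm_step f hf t (by omega))
    (fun t h1 h2 => AQm_d f t)

lemma Aa_clique (f : ℤ) (hf : f = 0 ∨ f = 2*(m:ℤ)) : ∀ a b : ℕ, a < b → b < n →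
    BishopMove n m (ALa n f a) (ALa n f b) := fun a b hab hb =>
  chain_bishop (ALa n f) (AQa n f) a b hab (fun t h1 h2 => ALa_step f hf t (by omega))
    (fun t h1 h2 => AQa_d f t)

/-- The eight corner-to-corner side diagonals. -/
def BLa (n : ℕ) (q : ℤ) (t : ℕ) : Pt := ch n (2*(n:ℤ)*q+1+2*(t:ℤ)) (1+2*(t:ℤ))
def BQa (n : ℕ) (q : ℤ) (t : ℕ) : Pt := ch n (2*(n:ℤ)*q+2*(t:ℤ)) (2*(t:ℤ))
def BLd (n m : ℕ) (q : ℤ) (t : ℕ) : Pt := ch n (2*(n:ℤ)*q+1+2*(t:ℤ)) (2*(m:ℤ)-1-2*(t:ℤ))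
def BQd (n m : ℕ) (q : ℤ) (t : ℕ) : Pt := ch n (2*(n:ℤ)*q+2*(t:ℤ)) (2*(m:ℤ)-2*(t:ℤ))

lemma odd2 (x : ℤ) : (1 + 2*x) % 2 = 1 := by rw [Int.add_mul_emod_self_left]; decide

lemma even2 (x : ℤ) : (2*x) % 2 = 0 := Int.mul_emod_right 2 x

lemma BLa_step (hn : 0 < n) (q : ℤ) (t : ℕ) (ht : t + 1 < m) :
    StepDat n m (BLa n q t) (BLa n q (t+1)) (BQa n q (t+1)) := by
  have h := step_side (n := n) (m := m) hn (1+2*(t:ℤ)) (by omega) (by omega) (by omega)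
    (2*(n:ℤ)*q+1+2*(t:ℤ))
    (by rw [show 2*(n:ℤ)*q+1+2*(t:ℤ) = 1+2*((n:ℤ)*q+(t:ℤ)) by ring]; exact odd2 _)
  unfold BLa BQa
  rw [ch_arg (show 2*(n:ℤ)*q+1+2*((t+1:ℕ):ℤ) = (2*(n:ℤ)*q+1+2*(t:ℤ))+2 by push_cast; ring)
      (show 1+2*((t+1:ℕ):ℤ) = (1+2*(t:ℤ))+2 by push_cast; ring),
    ch_arg (show 2*(n:ℤ)*q+2*((t+1:ℕ):ℤ) = (2*(n:ℤ)*q+1+2*(t:ℤ))+1 by push_cast; ring)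
      (show 2*((t+1:ℕ):ℤ) = (1+2*(t:ℤ))+1 by push_cast; ring)]
  exact h

lemma BLd_step (hn : 0 < n) (q : ℤ) (t : ℕ) (ht : t + 1 < m) :
    StepDat n m (BLd n m q t) (BLd n m q (t+1)) (BQd n m q (t+1)) := by
  have h := step_side_down (n := n) (m := m) hn (2*(m:ℤ)-1-2*(t:ℤ)) (by omega) (by omega)
    (by omega) (2*(n:ℤ)*q+1+2*(t:ℤ))
    (by rw [show 2*(n:ℤ)*q+1+2*(t:ℤ) = 1+2*((n:ℤ)*q+(t:ℤ)) by ring]; exact odd2 _)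
  unfold BLd BQd
  rw [ch_arg (show 2*(n:ℤ)*q+1+2*((t+1:ℕ):ℤ) = (2*(n:ℤ)*q+1+2*(t:ℤ))+2 by push_cast; ring)
      (show 2*(m:ℤ)-1-2*((t+1:ℕ):ℤ) = (2*(m:ℤ)-1-2*(t:ℤ))-2 by push_cast; ring),
    ch_arg (show 2*(n:ℤ)*q+2*((t+1:ℕ):ℤ) = (2*(n:ℤ)*q+1+2*(t:ℤ))+1 by push_cast; ring)
      (show 2*(m:ℤ)-2*((t+1:ℕ):ℤ) = (2*(m:ℤ)-1-2*(t:ℤ))-1 by push_cast; ring)]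
  exact h

lemma BQa_d (hn : 0 < n) (q : ℤ) (t : ℕ) : dist2 (BQa n q t) (BQa n q (t+1)) = 8 := by
  have h := d_side_up (n := n) hn (2*(t:ℤ)) (2*(n:ℤ)*q+2*(t:ℤ))
    (by rw [show 2*(n:ℤ)*q+2*(t:ℤ) = 2*((n:ℤ)*q+(t:ℤ)) by ring]; exact even2 _)
  unfold BQa
  rw [ch_arg (show 2*(n:ℤ)*q+2*((t+1:ℕ):ℤ) = (2*(n:ℤ)*q+2*(t:ℤ))+2 by push_cast; ring)
      (show 2*((t+1:ℕ):ℤ) = 2*(t:ℤ)+2 by push_cast; ring)]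
  exact h

lemma BQd_d (hn : 0 < n) (q : ℤ) (t : ℕ) : dist2 (BQd n m q t) (BQd n m q (t+1)) = 8 := by
  have h := d_side_down (n := n) hn (2*(m:ℤ)-2*(t:ℤ)) (2*(n:ℤ)*q+2*(t:ℤ))
    (by rw [show 2*(n:ℤ)*q+2*(t:ℤ) = 2*((n:ℤ)*q+(t:ℤ)) by ring]; exact even2 _)
  unfold BQd
  rw [ch_arg (show 2*(n:ℤ)*q+2*((t+1:ℕ):ℤ) = (2*(n:ℤ)*q+2*(t:ℤ))+2 by push_cast; ring)
      (show 2*(m:ℤ)-2*((t+1:ℕ):ℤ) = (2*(m:ℤ)-2*(t:ℤ))-2 by push_cast; ring)]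
  exact h

lemma Ba_clique (hn : 0 < n) (q : ℤ) : ∀ a b : ℕ, a < b → b < m →
    BishopMove n m (BLa n q a) (BLa n q b) := fun a b hab hb =>
  chain_bishop (BLa n q) (BQa n q) a b hab (fun t h1 h2 => BLa_step hn q t (by omega))
    (fun t h1 h2 => BQa_d hn q t)

lemma Bd_clique (hn : 0 < n) (q : ℤ) : ∀ a b : ℕ, a < b → b < m →
    BishopMove n m (BLd n m q a) (BLd n m q b) := fun a b hab hb =>
  chain_bishop (BLd n m q) (BQd n m q) a b hab (fun t h1 h2 => BLd_step hn q t (by omega))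
    (fun t h1 h2 => BQd_d hn q t)

end BishopAux
namespace BishopAux

variable {n m : ℕ}

lemma capt_base2 {ω : ℤ} (f t : ℤ) (h0 : 2*(n:ℤ) ≤ ω) (h1 : ω < 4*(n:ℤ)) :
    capt n f ω t = ![2*(n:ℤ) - 1 - 2*t, ω - 2*(n:ℤ) + 1 + 2*t, f] := by
  unfold capt; rw [Int.emod_eq_of_lt (by omega) (by omega), if_neg (by omega), if_pos h1]

lemma capt_base3 {ω : ℤ} (f t : ℤ) (h0 : 4*(n:ℤ) ≤ ω) (h1 : ω < 6*(n:ℤ)) :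
    capt n f ω t = ![6*(n:ℤ) - ω - 1 - 2*t, 2*(n:ℤ) - 1 - 2*t, f] := by
  unfold capt
  rw [Int.emod_eq_of_lt (by omega) (by omega), if_neg (by omega), if_neg (by omega), if_pos h1]

lemma capt_base4 {ω : ℤ} (f t : ℤ) (h0 : 6*(n:ℤ) ≤ ω) (h1 : ω < 8*(n:ℤ)) :
    capt n f ω t = ![1 + 2*t, 8*(n:ℤ) - ω - 1 - 2*t, f] := by
  unfold capt
  rw [Int.emod_eq_of_lt (by omega) (by omega), if_neg (by omega), if_neg (by omega),
    if_neg (by omega)]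

section mems

variable (hn : 0 < n) (hm0 : 0 < m) {g : ℕ} (hg1 : 1 ≤ g) (hg2 : g ≤ 2*n-1) (hgn : g ≠ n)
  (h2m : ∃ c : ℤ, 2*(m:ℤ) = 2*(n:ℤ)*c) (h8 : ∃ c : ℤ, 4*(m:ℤ) = 8*(n:ℤ)*c)

include hn hm0 hg1 hg2 hgn h2m h8

/-- Membership of an ascending side square in the long diagonal `g`. -/
lemma CL_asc (p : ℕ) (hp : p ≤ 1) (tz : ℕ) (htz : tz < m) (w : ℤ)
    (hw : w % (8*(n:ℤ)) = (2*(g:ℤ) + 4*(n:ℤ)*(p:ℤ) + 1 + 2*(tz:ℤ)) % (8*(n:ℤ))) :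
    CL n m g (p*(2*m+n) + tz) = ch n w (1 + 2*(tz:ℤ)) := by
  interval_cases p
  · rw [CL_eval1 g _ (by simpa using by omega : 0*(2*m+n)+tz < 2*m+n),
      HL_eval1 n m (g % n) (2*(g:ℤ)) _ (2*(g:ℤ)+1+2*(tz:ℤ)) (1+2*(tz:ℤ)) (by omega)
        (by push_cast; ring) (by push_cast; ring)]
    refine (ch_congr n _ ?_).symm
    rw [hw]; try (push_cast; ring_nf)
  · rw [CL_eval2 g _ (by omega) tz (by omega),
      HL_eval1 n m (g % n) _ tz (2*(g:ℤ)+4*(n:ℤ)+1+2*(tz:ℤ)) (1+2*(tz:ℤ)) (by omega)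
        (by push_cast; ring) (by push_cast; ring)]
    refine (ch_congr n _ ?_).symm
    rw [hw]; try (push_cast; ring_nf)

/-- Membership of a descending side square in the long diagonal `g`. -/
lemma CL_desc (p : ℕ) (hp : p ≤ 1) (tz : ℕ) (htz : tz < m) (w : ℤ)
    (hw : w % (8*(n:ℤ)) = (2*(g:ℤ) + 4*(n:ℤ)*(p:ℤ) + 2*(m:ℤ) - 4*((g%n : ℕ):ℤ) + 4*(n:ℤ) + 1
      + 2*(tz:ℤ)) % (8*(n:ℤ))) :
    CL n m g (p*(2*m+n) + (m + (n - g%n)) + tz) = ch n w (2*(m:ℤ) - 1 - 2*(tz:ℤ)) := by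
  have hrn := hrn_lem hn hm0 hg1 hg2 hgn h2m h8
  interval_cases p
  · rw [CL_eval1 g _ (by omega),
      HL_eval3 n m (g % n) (2*(g:ℤ)) _
        (2*(g:ℤ) + 2*(m:ℤ) - 4*((g%n : ℕ):ℤ) + 4*(n:ℤ) + 1 + 2*(tz:ℤ))
        (2*(m:ℤ) - 1 - 2*(tz:ℤ)) (by omega) (by omega)
        (by push_cast; omega) (by push_cast; omega)]
    refine (ch_congr n _ ?_).symm
    rw [hw]; try (push_cast; ring_nf)
  · rw [CL_eval2 g _ (by omega) ((m + (n - g%n)) + tz) (by omega),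
      HL_eval3 n m (g % n) _ _
        (2*(g:ℤ) + 4*(n:ℤ) + 2*(m:ℤ) - 4*((g%n : ℕ):ℤ) + 4*(n:ℤ) + 1 + 2*(tz:ℤ))
        (2*(m:ℤ) - 1 - 2*(tz:ℤ)) (by omega) (by omega)
        (by push_cast; omega) (by push_cast; omega)]
    refine (ch_congr n _ ?_).symm
    rw [hw]; try (push_cast; ring_nf)

/-- Membership of a top-cap square in the long diagonal `g`. -/
lemma CL_capT (p : ℕ) (hp : p ≤ 1) (tc : ℕ) (htc : tc < n - g%n) (Ω : ℤ)
    (hΩ : Ω % (8*(n:ℤ)) = (2*(g:ℤ) + 4*(n:ℤ)*(p:ℤ) + 2*(m:ℤ)) % (8*(n:ℤ))) :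
    CL n m g (p*(2*m+n) + (m + tc)) = capt n (2*(m:ℤ)) Ω tc := by
  interval_cases p
  · rw [CL_eval1 g _ (by omega),
      HL_eval2 n m (g % n) (2*(g:ℤ)) _ (tc:ℤ) (by omega) (by omega) (by push_cast; ring)]
    refine (capt_congr n _ _ ?_).symm
    rw [hΩ]; try (push_cast; ring_nf)
  · rw [CL_eval2 g _ (by omega) (m + tc) (by omega),
      HL_eval2 n m (g % n) _ _ (tc:ℤ) (by omega) (by omega) (by push_cast; ring)]
    refine (capt_congr n _ _ ?_).symm
    rw [hΩ]; try (push_cast; ring_nf)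

/-- Membership of a bottom-cap square in the long diagonal `g`. -/
lemma CL_capB (p : ℕ) (hp : p ≤ 1) (tc : ℕ) (htc : tc < g%n) (Ω : ℤ)
    (hΩ : Ω % (8*(n:ℤ)) = (2*(g:ℤ) + 4*(n:ℤ)*(p:ℤ) + 4*(m:ℤ) + 4*(n:ℤ) - 4*((g%n : ℕ):ℤ))
      % (8*(n:ℤ))) :
    CL n m g (p*(2*m+n) + (2*m + (n - g%n)) + tc) = capt n 0 Ω tc := by
  have hrn := hrn_lem hn hm0 hg1 hg2 hgn h2m h8
  interval_cases p
  · rw [CL_eval1 g _ (by omega),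
      HL_eval4 n m (g % n) (2*(g:ℤ)) _ (tc:ℤ) (by omega) (by push_cast; omega)]
    refine (capt_congr n _ _ ?_).symm
    rw [hΩ]; try (push_cast; ring_nf)
  · rw [CL_eval2 g _ (by omega) ((2*m + (n - g%n)) + tc) (by omega),
      HL_eval4 n m (g % n) _ _ (tc:ℤ) (by omega) (by push_cast; omega)]
    refine (capt_congr n _ _ ?_).symm
    rw [hΩ]; try (push_cast; ring_nf)

end mems

/-- Membership for the corner-to-corner side diagonals. -/
lemma BLa_mem (q : ℤ) (tz : ℕ) (w : ℤ)
    (hw : w % (8*(n:ℤ)) = (2*(n:ℤ)*q + 1 + 2*(tz:ℤ)) % (8*(n:ℤ))) :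
    BLa n q tz = ch n w (1 + 2*(tz:ℤ)) := (ch_congr n _ hw.symm : _)

lemma BLd_mem (q : ℤ) (tz : ℕ) (w : ℤ)
    (hw : w % (8*(n:ℤ)) = (2*(n:ℤ)*q + 1 + 2*(tz:ℤ)) % (8*(n:ℤ))) :
    BLd n m q tz = ch n w (2*(m:ℤ) - 1 - 2*(tz:ℤ)) := (ch_congr n _ hw.symm : _)

end BishopAux
namespace BishopAux

variable {n m : ℕ}

/-- The indexed family of 2n+10 diagonal cliques. -/
def Lfun (n m : ℕ) (ℓ : ℤ) : ℕ → Pt :=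
  if ℓ = -1 then ALm (2*(m:ℤ))
  else if ℓ = -2 then ALa n (2*(m:ℤ))
  else if ℓ = -3 then ALm 0
  else if ℓ = -4 then ALa n 0
  else if -8 ≤ ℓ ∧ ℓ ≤ -5 then BLa n (-5-ℓ)
  else if ℓ < 0 then BLd n m (-9-ℓ)
  else CL n m ℓ.toNat

def lenL (n m : ℕ) (ℓ : ℤ) : ℕ :=
  if ℓ ≤ -5 then m else if ℓ < 0 then n else 4*m+2*n

def TSet (n : ℕ) : Finset ℤ :=
  ((Finset.Icc 1 (2*n-1)).erase n).image (fun g : ℕ => (g : ℤ)) ∪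
    {-1,-2,-3,-4,-5,-6,-7,-8,-9,-10,-11,-12}

lemma Lfun_A1 : Lfun n m (-1) = ALm (2*(m:ℤ)) := by unfold Lfun; rw [if_pos rfl]
lemma Lfun_A2 : Lfun n m (-2) = ALa n (2*(m:ℤ)) := by
  unfold Lfun; rw [if_neg (by omega), if_pos rfl]
lemma Lfun_A3 : Lfun n m (-3) = ALm 0 := by
  unfold Lfun; rw [if_neg (by omega), if_neg (by omega), if_pos rfl]
lemma Lfun_A4 : Lfun n m (-4) = ALa n 0 := by
  unfold Lfun; rw [if_neg (by omega), if_neg (by omega), if_neg (by omega), if_pos rfl]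
lemma Lfun_Ba {ℓ : ℤ} (h1 : -8 ≤ ℓ) (h2 : ℓ ≤ -5) : Lfun n m ℓ = BLa n (-5-ℓ) := by
  unfold Lfun
  rw [if_neg (by omega), if_neg (by omega), if_neg (by omega), if_neg (by omega),
    if_pos ⟨h1, h2⟩]
lemma Lfun_Bd {ℓ : ℤ} (h1 : -12 ≤ ℓ) (h2 : ℓ ≤ -9) : Lfun n m ℓ = BLd n m (-9-ℓ) := by
  unfold Lfun
  rw [if_neg (by omega), if_neg (by omega), if_neg (by omega), if_neg (by omega),
    if_neg (by omega), if_pos (by omega)]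
lemma Lfun_Cz {gz : ℤ} (h : 1 ≤ gz) : Lfun n m gz = CL n m gz.toNat := by
  unfold Lfun
  rw [if_neg (by omega), if_neg (by omega), if_neg (by omega), if_neg (by omega),
    if_neg (by omega), if_neg (by omega)]

lemma Lfun_C (g : ℕ) (hg : 1 ≤ g) : Lfun n m (g:ℤ) = CL n m g := by
  unfold Lfun
  rw [if_neg (by omega), if_neg (by omega), if_neg (by omega), if_neg (by omega),
    if_neg (by omega), if_neg (by omega)]
  simp

lemma lenL_B {ℓ : ℤ} (h : ℓ ≤ -5) : lenL n m ℓ = m := by unfold lenL; rw [if_pos h]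
lemma lenL_A {ℓ : ℤ} (h1 : -4 ≤ ℓ) (h2 : ℓ ≤ -1) : lenL n m ℓ = n := by
  unfold lenL; rw [if_neg (by omega), if_pos (by omega)]
lemma lenL_C {ℓ : ℤ} (h : 0 ≤ ℓ) : lenL n m ℓ = 4*m+2*n := by
  unfold lenL; rw [if_neg (by omega), if_neg (by omega)]

lemma C_mem_T {g : ℕ} (hg1 : 1 ≤ g) (hg2 : g ≤ 2*n-1) (hgn : g ≠ n) : (g:ℤ) ∈ TSet n :=
  Finset.mem_union_left _ (Finset.mem_image.mpr
    ⟨g, Finset.mem_erase.mpr ⟨hgn, Finset.mem_Icc.mpr ⟨hg1, hg2⟩⟩, rfl⟩)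

lemma Cz_mem_T {gz : ℤ} (hg1 : 1 ≤ gz) (hg2 : gz ≤ 2*(n:ℤ)-1) (hgn : gz ≠ (n:ℤ)) :
    gz ∈ TSet n := by
  have h : ((gz.toNat : ℕ) : ℤ) = gz := Int.toNat_of_nonneg (by omega)
  rw [← h]
  exact C_mem_T (by omega) (by omega) (by omega)

lemma neg_mem_T {ℓ : ℤ} (h1 : -12 ≤ ℓ) (h2 : ℓ ≤ -1) : ℓ ∈ TSet n := by
  refine Finset.mem_union_right _ ?_
  simp only [Finset.mem_insert, Finset.mem_singleton]
  omega

section cover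

variable (hn : 0 < n) (hm0 : 0 < m)
  (h2m : ∃ c : ℤ, 2*(m:ℤ) = 2*(n:ℤ)*c) (h8 : ∃ c : ℤ, 4*(m:ℤ) = 8*(n:ℤ)*c)

include hn hm0 h2m h8

/-- Every side square lies on two distinct members of the family. -/
lemma cover_side (w z : ℤ) (hwo : w % 2 = 1) (hzo : z % 2 = 1)
    (hz0 : 0 < z) (hz1 : z < 2*(m:ℤ)) :
    ∃ ℓ1 ℓ2 : ℤ, ℓ1 ∈ TSet n ∧ ℓ2 ∈ TSet n ∧ ℓ1 ≠ ℓ2 ∧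
      (∃ t, t < lenL n m ℓ1 ∧ Lfun n m ℓ1 t = ch n w z) ∧
      (∃ t, t < lenL n m ℓ2 ∧ Lfun n m ℓ2 t = ch n w z) := by
  obtain ⟨cm, hcm⟩ := h2m
  obtain ⟨c8, hc8⟩ := h8
  obtain ⟨az, haz⟩ : ∃ a : ℤ, z = 2*a+1 := ⟨z/2, by omega⟩
  obtain ⟨aw, haw⟩ : ∃ a : ℤ, w = 2*a+1 := ⟨w/2, by omega⟩
  obtain ⟨azd, hazd⟩ : ∃ a : ℤ, z = 2*(m:ℤ)-1-2*a := ⟨(2*(m:ℤ)-1-z)/2, by omega⟩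
  have haz0 : 0 ≤ az := by omega
  have hazm : az < m := by omega
  have hazd0 : 0 ≤ azd := by omega
  have hazdm : azd < m := by omega
  have hcast1 : ((az.toNat : ℕ) : ℤ) = az := Int.toNat_of_nonneg haz0
  have hcast2 : ((azd.toNat : ℕ) : ℤ) = azd := Int.toNat_of_nonneg hazd0
  have H1 : ∃ ℓ1 : ℤ, ℓ1 ∈ TSet n ∧ ((-8 ≤ ℓ1 ∧ ℓ1 ≤ -5) ∨ (1 ≤ ℓ1 ∧ ℓ1 ≤ 2*(n:ℤ)-1 ∧
        (w - z) % (4*(n:ℤ)) = 2*ℓ1)) ∧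
      (∃ t, t < lenL n m ℓ1 ∧ Lfun n m ℓ1 t = ch n w z) := by
    by_cases hB : (2*(n:ℤ)) ∣ (w - z)
    · obtain ⟨u, hu⟩ := hB
      have hQR := Int.mul_ediv_add_emod u 4
      refine ⟨-5 - (u % 4), neg_mem_T (by omega) (by omega), Or.inl (by omega), az.toNat, ?_, ?_⟩
      · rw [lenL_B (by omega)]; omega
      · rw [Lfun_Ba (by omega) (by omega), show -5 - (-5 - (u % 4)) = u % 4 by ring,
          BLa_mem (n := n) (u % 4) az.toNat w
            (emod_congr _ _ _ (u / 4)
              (by rw [hcast1]; linear_combination hu - 2*(n:ℤ)*hQR + haz))]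
        exact ch_arg rfl (by omega)
    · have hS := Int.mul_ediv_add_emod (w - z) (4*(n:ℤ))
      set cS := (w - z) / (4*(n:ℤ)) with hcSd
      set S := (w - z) % (4*(n:ℤ)) with hSdef
      have hS0 : 0 ≤ S := Int.emod_nonneg _ (by positivity)
      have hS1 : S < 4*(n:ℤ) := Int.emod_lt_of_pos _ (by positivity)
      obtain ⟨gz, hgz⟩ : ∃ gz : ℤ, S = 2*gz :=
        ⟨aw - az - 2*(n:ℤ)*cS, by linear_combination hS + haw - haz⟩
      have hSne0 : S ≠ 0 := fun h => hB ⟨2*cS, by rw [h] at hS; linear_combination -hS⟩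
      have hSne2n : S ≠ 2*(n:ℤ) := fun h => hB ⟨2*cS+1, by rw [h] at hS; linear_combination -hS⟩
      have hQR := Int.mul_ediv_add_emod cS 2
      have hp0 : 0 ≤ cS % 2 := by omega
      have hpcast : (((cS % 2).toNat : ℕ) : ℤ) = cS % 2 := Int.toNat_of_nonneg hp0
      have hple : (cS % 2).toNat * (2*m+n) ≤ 2*m+n := by
        have h01 : (cS % 2).toNat ≤ 1 := by omega
        calc (cS % 2).toNat * (2*m+n) ≤ 1*(2*m+n) := Nat.mul_le_mul_right _ h01
        _ = 2*m+n := one_mul _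
      refine ⟨gz, Cz_mem_T (by omega) (by omega) (by omega),
        Or.inr ⟨by omega, by omega, by omega⟩,
        (cS % 2).toNat*(2*m+n) + az.toNat, ?_, ?_⟩
      · rw [lenL_C (by omega)]; omega
      · rw [Lfun_Cz (by omega),
          CL_asc hn hm0 (by omega) (by omega) (by omega) ⟨cm, hcm⟩ ⟨c8, hc8⟩ (cS % 2).toNat
            (by omega) az.toNat (by omega) w
            (emod_congr _ _ _ (cS / 2)
              (by rw [hpcast, hcast1, Int.toNat_of_nonneg (show (0:ℤ) ≤ gz by omega)]
                  linear_combination -hS + hgz - 4*(n:ℤ)*hQR + haz))]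
        exact ch_arg rfl (by omega)
  have H2 : ∃ ℓ2 : ℤ, ℓ2 ∈ TSet n ∧ ((-12 ≤ ℓ2 ∧ ℓ2 ≤ -9) ∨ (1 ≤ ℓ2 ∧ ℓ2 ≤ 2*(n:ℤ)-1 ∧
        (w + z) % (4*(n:ℤ)) = 4*(n:ℤ) - 2*ℓ2)) ∧
      (∃ t, t < lenL n m ℓ2 ∧ Lfun n m ℓ2 t = ch n w z) := by
    by_cases hB : (2*(n:ℤ)) ∣ (w + z)
    · obtain ⟨u, hu⟩ := hB
      have hQR := Int.mul_ediv_add_emod (u - cm) 4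
      refine ⟨-9 - ((u - cm) % 4), neg_mem_T (by omega) (by omega), Or.inl (by omega),
        azd.toNat, ?_, ?_⟩
      · rw [lenL_B (by omega)]; omega
      · rw [Lfun_Bd (by omega) (by omega), show -9 - (-9 - ((u-cm) % 4)) = (u-cm) % 4 by ring,
          BLd_mem (n := n) ((u-cm) % 4) azd.toNat w
            (emod_congr _ _ _ ((u-cm) / 4)
              (by rw [hcast2]; linear_combination hu - hazd - hcm - 2*(n:ℤ)*hQR))]
        exact ch_arg rfl (by omega)
    · have hS := Int.mul_ediv_add_emod (w + z) (4*(n:ℤ))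
      set cS := (w + z) / (4*(n:ℤ)) with hcSd
      set S := (w + z) % (4*(n:ℤ)) with hSdef
      have hS0 : 0 ≤ S := Int.emod_nonneg _ (by positivity)
      have hS1 : S < 4*(n:ℤ) := Int.emod_lt_of_pos _ (by positivity)
      obtain ⟨sz, hsz⟩ : ∃ sz : ℤ, S = 2*sz :=
        ⟨aw + az + 1 - 2*(n:ℤ)*cS, by linear_combination hS + haw + haz⟩
      have hSne0 : S ≠ 0 := fun h => hB ⟨2*cS, by rw [h] at hS; linear_combination -hS⟩
      have hSne2n : S ≠ 2*(n:ℤ) := fun h => hB ⟨2*cS+1, by rw [h] at hS; linear_combination -hS⟩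
      set gz : ℤ := 2*(n:ℤ) - sz with hgzd
      have hgz1 : 1 ≤ gz := by omega
      have hgz2 : gz ≤ 2*(n:ℤ)-1 := by omega
      have hgcast : ((gz.toNat : ℕ) : ℤ) = gz := Int.toNat_of_nonneg (by omega)
      have hlen : m + (n - gz.toNat % n) + azd.toNat < 2*m+n := by
        have hh := hr0_lem (g := gz.toNat) hn hm0 (by omega) (by omega) (by omega)
          ⟨cm, hcm⟩ ⟨c8, hc8⟩
        omega
      rcases Nat.lt_or_ge gz.toNat n with hcase | hcase
      · have hrv : ((gz.toNat % n : ℕ) : ℤ) = gz := by rw [Nat.mod_eq_of_lt hcase, hgcast]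
        have hQR := Int.mul_ediv_add_emod cS 2
        have hp0 : 0 ≤ cS % 2 := by omega
        have hpcast : (((cS % 2).toNat : ℕ) : ℤ) = cS % 2 := Int.toNat_of_nonneg hp0
        have hple : (cS % 2).toNat * (2*m+n) ≤ 2*m+n := by
          have h01 : (cS % 2).toNat ≤ 1 := by omega
          calc (cS % 2).toNat * (2*m+n) ≤ 1*(2*m+n) := Nat.mul_le_mul_right _ h01
          _ = 2*m+n := one_mul _
        refine ⟨gz, Cz_mem_T (by omega) (by omega) (by omega),
          Or.inr ⟨by omega, by omega, by omega⟩,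
          (cS % 2).toNat*(2*m+n) + (m + (n - gz.toNat % n)) + azd.toNat, ?_, ?_⟩
        · rw [lenL_C (by omega)]; omega
        · rw [Lfun_Cz (by omega),
            CL_desc hn hm0 (by omega) (by omega) (by omega) ⟨cm, hcm⟩ ⟨c8, hc8⟩
              (cS % 2).toNat (by omega) azd.toNat (by omega) w
              (emod_congr _ _ _ (cS/2 - c8)
                (by rw [hgcast, hpcast, hcast2, hrv]
                    linear_combination -hS + hsz - hc8 - 4*(n:ℤ)*hQR - hazd))]
          exact ch_arg rfl (by omega)
      · have hrv : ((gz.toNat % n : ℕ) : ℤ) = gz - (n:ℤ) := by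
          rw [Nat.mod_eq_sub_mod hcase, Nat.mod_eq_of_lt (by omega)]
          omega
        have hQR := Int.mul_ediv_add_emod (cS+1) 2
        have hp0 : 0 ≤ (cS+1) % 2 := by omega
        have hpcast : ((((cS+1) % 2).toNat : ℕ) : ℤ) = (cS+1) % 2 := Int.toNat_of_nonneg hp0
        have hple : ((cS+1) % 2).toNat * (2*m+n) ≤ 2*m+n := by
          have h01 : ((cS+1) % 2).toNat ≤ 1 := by omega
          calc ((cS+1) % 2).toNat * (2*m+n) ≤ 1*(2*m+n) := Nat.mul_le_mul_right _ h01
          _ = 2*m+n := one_mul _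
        refine ⟨gz, Cz_mem_T (by omega) (by omega) (by omega),
          Or.inr ⟨by omega, by omega, by omega⟩,
          ((cS+1) % 2).toNat*(2*m+n) + (m + (n - gz.toNat % n)) + azd.toNat, ?_, ?_⟩
        · rw [lenL_C (by omega)]; omega
        · rw [Lfun_Cz (by omega),
            CL_desc hn hm0 (by omega) (by omega) (by omega) ⟨cm, hcm⟩ ⟨c8, hc8⟩
              ((cS+1) % 2).toNat (by omega) azd.toNat (by omega) w
              (emod_congr _ _ _ ((cS+1)/2 - 1 - c8)
                (by rw [hgcast, hpcast, hcast2, hrv]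
                    linear_combination -hS + hsz - hc8 - 4*(n:ℤ)*hQR - hazd))]
          exact ch_arg rfl (by omega)
  obtain ⟨ℓ1, hT1, hinv1, hmem1⟩ := H1
  obtain ⟨ℓ2, hT2, hinv2, hmem2⟩ := H2
  refine ⟨ℓ1, ℓ2, hT1, hT2, ?_, hmem1, hmem2⟩
  rintro rfl
  rcases hinv1 with h1 | ⟨h1a, h1b, h1c⟩
  · rcases hinv2 with h2 | ⟨h2a, _, _⟩ <;> omega
  rcases hinv2 with h2 | ⟨h2a, h2b, h2c⟩
  · omega
  have h3 := Int.mul_ediv_add_emod (w - z) (4*(n:ℤ))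
  have h4 := Int.mul_ediv_add_emod (w + z) (4*(n:ℤ))
  rw [h1c] at h3
  rw [h2c] at h4
  obtain ⟨d, hd⟩ : ∃ d : ℤ, 2*z = 4*d :=
    ⟨(n:ℤ)*((w+z)/(4*(n:ℤ))) - (n:ℤ)*((w-z)/(4*(n:ℤ))) + (n:ℤ) - ℓ1,
      by linear_combination h3 - h4⟩
  omega

end cover

end BishopAux
namespace BishopAux

variable {n m : ℕ}

section covercap
set_option maxHeartbeats 1000000

variable (hn : 0 < n) (hm0 : 0 < m)
  (h2m : ∃ c : ℤ, 2*(m:ℤ) = 2*(n:ℤ)*c) (h8 : ∃ c : ℤ, 4*(m:ℤ) = 8*(n:ℤ)*c)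

include hn hm0 h2m h8

/-- Every cap square lies on two distinct members of the family. -/
lemma cover_cap (x y f : ℤ) (hf : f = 0 ∨ f = 2*(m:ℤ)) (hxo : x % 2 = 1) (hyo : y % 2 = 1)
    (hx0 : 0 < x) (hx1 : x < 2*(n:ℤ)) (hy0 : 0 < y) (hy1 : y < 2*(n:ℤ)) :
    ∃ ℓ1 ℓ2 : ℤ, ℓ1 ∈ TSet n ∧ ℓ2 ∈ TSet n ∧ ℓ1 ≠ ℓ2 ∧
      (∃ t, t < lenL n m ℓ1 ∧ Lfun n m ℓ1 t = ![x, y, f]) ∧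
      (∃ t, t < lenL n m ℓ2 ∧ Lfun n m ℓ2 t = ![x, y, f]) := by
  obtain ⟨c8, hc8⟩ := h8
  have hmc : (m:ℤ) = 2*(n:ℤ)*c8 := by linarith
  have hP0 : ∃ (p : ℕ) (c : ℤ), p ≤ 1 ∧ 4*(n:ℤ)*(p:ℤ) + 2*(m:ℤ) = 8*(n:ℤ)*c := by
    rcases Int.even_or_odd c8 with ⟨e, he⟩ | ⟨e, he⟩
    · exact ⟨0, e, by omega, by push_cast; linear_combination 2*hmc + 4*(n:ℤ)*he⟩
    · exact ⟨1, e+1, by omega, by push_cast; linear_combination 2*hmc + 4*(n:ℤ)*he⟩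
  have hP1 : ∃ (p : ℕ) (c : ℤ), p ≤ 1 ∧ 4*(n:ℤ)*(p:ℤ) + 2*(m:ℤ) = 4*(n:ℤ) + 8*(n:ℤ)*c := by
    rcases Int.even_or_odd c8 with ⟨e, he⟩ | ⟨e, he⟩
    · exact ⟨1, e, by omega, by push_cast; linear_combination 2*hmc + 4*(n:ℤ)*he⟩
    · exact ⟨0, e, by omega, by push_cast; linear_combination 2*hmc + 4*(n:ℤ)*he⟩
  obtain ⟨ax, hax⟩ : ∃ a : ℤ, x = 2*a+1 := ⟨x/2, by omega⟩
  obtain ⟨ay, hay⟩ : ∃ a : ℤ, y = 2*a+1 := ⟨y/2, by omega⟩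
  -- membership helper for C labels at cap positions
  have capmem : ∀ (gz : ℤ) (p tc : ℕ), 1 ≤ gz → gz ≤ 2*(n:ℤ)-1 → gz ≠ (n:ℤ) → p ≤ 1 →
      (tc < n - gz.toNat % n) → ∀ Ω : ℤ,
      (Ω % (8*(n:ℤ)) = (2*((gz.toNat:ℕ):ℤ) + 4*(n:ℤ)*(p:ℤ) + 2*(m:ℤ)) % (8*(n:ℤ))) →
      (capt n (2*(m:ℤ)) Ω (tc:ℤ) = ![x, y, f]) → f = 2*(m:ℤ) →
      ∃ t, t < lenL n m gz ∧ Lfun n m gz t = ![x, y, f] := by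
    intro gz p tc hg1 hg2 hgn hp htc Ω hΩ hcap hftop
    have hple : p * (2*m+n) ≤ 2*m+n := by
      calc p * (2*m+n) ≤ 1*(2*m+n) := Nat.mul_le_mul_right _ hp
      _ = 2*m+n := one_mul _
    refine ⟨p*(2*m+n) + (m + tc), ?_, ?_⟩
    · rw [lenL_C (by omega)]; omega
    · rw [Lfun_Cz (by omega),
        CL_capT hn hm0 (by omega) (by omega) (by omega) h2m ⟨c8, hc8⟩ p hp tc htc Ω hΩ,
        hcap]
  have capmemB : ∀ (gz : ℤ) (p tc : ℕ), 1 ≤ gz → gz ≤ 2*(n:ℤ)-1 → gz ≠ (n:ℤ) → p ≤ 1 →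
      (tc < gz.toNat % n) → ∀ Ω : ℤ,
      (Ω % (8*(n:ℤ)) = (2*((gz.toNat:ℕ):ℤ) + 4*(n:ℤ)*(p:ℤ) + 4*(m:ℤ) + 4*(n:ℤ)
        - 4*((gz.toNat % n : ℕ):ℤ)) % (8*(n:ℤ))) →
      (capt n 0 Ω (tc:ℤ) = ![x, y, f]) → f = 0 →
      ∃ t, t < lenL n m gz ∧ Lfun n m gz t = ![x, y, f] := by
    intro gz p tc hg1 hg2 hgn hp htc Ω hΩ hcap hfbot
    have hple : p * (2*m+n) ≤ 2*m+n := by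
      calc p * (2*m+n) ≤ 1*(2*m+n) := Nat.mul_le_mul_right _ hp
      _ = 2*m+n := one_mul _
    have hrn := hrn_lem (g := gz.toNat) hn hm0 (by omega) (by omega) (by omega) h2m ⟨c8, hc8⟩
    refine ⟨p*(2*m+n) + (2*m + (n - gz.toNat % n)) + tc, ?_, ?_⟩
    · rw [lenL_C (by omega)]; omega
    · rw [Lfun_Cz (by omega),
        CL_capB hn hm0 (by omega) (by omega) (by omega) h2m ⟨c8, hc8⟩ p hp tc htc Ω hΩ,
        hcap]
  have H1 : ∃ ℓ1 : ℤ, ℓ1 ∈ TSet n ∧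
      ((f = 2*(m:ℤ) → (ℓ1 = -1 ∨ (1 ≤ ℓ1 ∧ ℓ1 ≤ (n:ℤ)-1))) ∧
       (f = 0 → (ℓ1 = -3 ∨ ((n:ℤ)+1 ≤ ℓ1 ∧ ℓ1 ≤ 2*(n:ℤ)-1)))) ∧
      (∃ t, t < lenL n m ℓ1 ∧ Lfun n m ℓ1 t = ![x, y, f]) := by
    by_cases hd : x = y
    · rcases hf with rfl | rfl
      · refine ⟨-3, neg_mem_T (by omega) (by omega), ⟨by omega, fun _ => Or.inl rfl⟩,
          ax.toNat, ?_, ?_⟩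
        · rw [lenL_A (by omega) (by omega)]; omega
        · rw [Lfun_A3]; unfold ALm
          exact vec_ext (by omega) (by omega) rfl
      · refine ⟨-1, neg_mem_T (by omega) (by omega), ⟨fun _ => Or.inl rfl, by omega⟩,
          ax.toNat, ?_, ?_⟩
        · rw [lenL_A (by omega) (by omega)]; omega
        · rw [Lfun_A1]; unfold ALm
          exact vec_ext (by omega) (by omega) rfl
    · rcases hf with rfl | rfl
      · -- bottom, label 2n - |x-y|/2 ∈ (n,2n)
        rcases lt_or_gt_of_ne hd with hxy | hxy
        · -- x < y, region 2, p = 0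
          set dz : ℤ := (y - x)/2 with hdzd
          have hdz : y - x = 2*dz := by omega
          set gz : ℤ := 2*(n:ℤ) - dz with hgzd
          have hgb : 1 ≤ dz ∧ dz ≤ (n:ℤ)-1 := by omega
          have hgcast : ((gz.toNat : ℕ) : ℤ) = gz := Int.toNat_of_nonneg (by omega)
          have hrv : ((gz.toNat % n : ℕ) : ℤ) = gz - (n:ℤ) := by
            rw [Nat.mod_eq_sub_mod (by omega), Nat.mod_eq_of_lt (by omega)]; omega
          refine ⟨gz, Cz_mem_T (by omega) (by omega) (by omega),
            ⟨by omega, fun _ => Or.inr ⟨by omega, by omega⟩⟩, ?_⟩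
          refine capmemB gz 0 ((2*(n:ℤ)-1-y)/2).toNat (by omega) (by omega) (by omega)
            (by omega) (by omega) (4*(n:ℤ)+(y-x)) ?_ ?_ rfl
          · refine emod_congr _ _ _ (-c8) ?_
            rw [hgcast, hrv]; push_cast; linear_combination hdz - hc8
          · rw [capt_base3 _ _ (by omega) (by omega)]
            exact vec_ext (by omega) (by omega) rfl
        · -- x > y, region 0, p = 1
          set dz : ℤ := (x - y)/2 with hdzd
          have hdz : x - y = 2*dz := by omega
          set gz : ℤ := 2*(n:ℤ) - dz with hgzd
          have hgcast : ((gz.toNat : ℕ) : ℤ) = gz := Int.toNat_of_nonneg (by omega)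
          have hrv : ((gz.toNat % n : ℕ) : ℤ) = gz - (n:ℤ) := by
            rw [Nat.mod_eq_sub_mod (by omega), Nat.mod_eq_of_lt (by omega)]; omega
          refine ⟨gz, Cz_mem_T (by omega) (by omega) (by omega),
            ⟨by omega, fun _ => Or.inr ⟨by omega, by omega⟩⟩, ?_⟩
          refine capmemB gz 1 ((y-1)/2).toNat (by omega) (by omega) (by omega)
            (by omega) (by omega) (x-y) ?_ ?_ rfl
          · refine emod_congr _ _ _ (-1-c8) ?_
            rw [hgcast, hrv]; push_cast; linear_combination hdz - hc8
          · rw [capt_base1 _ _ (by omega) (by omega)]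
            exact vec_ext (by omega) (by omega) rfl
      · -- top, label |x-y|/2 ∈ (0,n)
        rcases lt_or_gt_of_ne hd with hxy | hxy
        · -- x < y, region 2, needs hP1
          obtain ⟨p, c, hp, hpEq⟩ := hP1
          set gz : ℤ := (y - x)/2 with hgzd
          have hdz : y - x = 2*gz := by omega
          have hgcast : ((gz.toNat : ℕ) : ℤ) = gz := Int.toNat_of_nonneg (by omega)
          have hrv : ((gz.toNat % n : ℕ) : ℤ) = gz := by
            rw [Nat.mod_eq_of_lt (by omega)]; exact hgcast
          refine ⟨gz, Cz_mem_T (by omega) (by omega) (by omega),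
            ⟨fun _ => Or.inr ⟨by omega, by omega⟩, by omega⟩, ?_⟩
          refine capmem gz p ((2*(n:ℤ)-1-y)/2).toNat (by omega) (by omega) (by omega)
            hp (by omega) (4*(n:ℤ)+(y-x)) ?_ ?_ rfl
          · refine emod_congr _ _ _ (-c) ?_
            rw [hgcast]; linear_combination hdz - hpEq
          · rw [capt_base3 _ _ (by omega) (by omega)]
            exact vec_ext (by omega) (by omega) rfl
        · -- x > y, region 0, needs hP0
          obtain ⟨p, c, hp, hpEq⟩ := hP0
          set gz : ℤ := (x - y)/2 with hgzd
          have hdz : x - y = 2*gz := by omega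
          have hgcast : ((gz.toNat : ℕ) : ℤ) = gz := Int.toNat_of_nonneg (by omega)
          have hrv : ((gz.toNat % n : ℕ) : ℤ) = gz := by
            rw [Nat.mod_eq_of_lt (by omega)]; exact hgcast
          refine ⟨gz, Cz_mem_T (by omega) (by omega) (by omega),
            ⟨fun _ => Or.inr ⟨by omega, by omega⟩, by omega⟩, ?_⟩
          refine capmem gz p ((y-1)/2).toNat (by omega) (by omega) (by omega)
            hp (by omega) (x-y) ?_ ?_ rfl
          · refine emod_congr _ _ _ (-c) ?_
            rw [hgcast]; linear_combination hdz - hpEq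
          · rw [capt_base1 _ _ (by omega) (by omega)]
            exact vec_ext (by omega) (by omega) rfl
  have H2 : ∃ ℓ2 : ℤ, ℓ2 ∈ TSet n ∧
      ((f = 2*(m:ℤ) → (ℓ2 = -2 ∨ ((n:ℤ)+1 ≤ ℓ2 ∧ ℓ2 ≤ 2*(n:ℤ)-1))) ∧
       (f = 0 → (ℓ2 = -4 ∨ (1 ≤ ℓ2 ∧ ℓ2 ≤ (n:ℤ)-1)))) ∧
      (∃ t, t < lenL n m ℓ2 ∧ Lfun n m ℓ2 t = ![x, y, f]) := by
    by_cases hd : x + y = 2*(n:ℤ)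
    · rcases hf with rfl | rfl
      · refine ⟨-4, neg_mem_T (by omega) (by omega), ⟨by omega, fun _ => Or.inl rfl⟩,
          ay.toNat, ?_, ?_⟩
        · rw [lenL_A (by omega) (by omega)]; omega
        · rw [Lfun_A4]; unfold ALa
          exact vec_ext (by omega) (by omega) rfl
      · refine ⟨-2, neg_mem_T (by omega) (by omega), ⟨fun _ => Or.inl rfl, by omega⟩,
          ay.toNat, ?_, ?_⟩
        · rw [lenL_A (by omega) (by omega)]; omega
        · rw [Lfun_A2]; unfold ALa
          exact vec_ext (by omega) (by omega) rfl
    · rcases hf with rfl | rfl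
      · -- bottom, label ∈ (0,n)
        rcases lt_or_gt_of_ne hd with hxy | hxy
        · -- x + y < 2n, region 3, p = 1
          set gz : ℤ := (x+y)/2 with hgzd
          have hdz : x + y = 2*gz := by omega
          have hgcast : ((gz.toNat : ℕ) : ℤ) = gz := Int.toNat_of_nonneg (by omega)
          have hrv : ((gz.toNat % n : ℕ) : ℤ) = gz := by
            rw [Nat.mod_eq_of_lt (by omega)]; exact hgcast
          refine ⟨gz, Cz_mem_T (by omega) (by omega) (by omega),
            ⟨by omega, fun _ => Or.inr ⟨by omega, by omega⟩⟩, ?_⟩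
          refine capmemB gz 1 ((x-1)/2).toNat (by omega) (by omega) (by omega)
            (by omega) (by omega) (8*(n:ℤ)-(x+y)) ?_ ?_ rfl
          · refine emod_congr _ _ _ (-c8) ?_
            rw [hgcast, hrv]; linear_combination -hdz - hc8
          · rw [capt_base4 _ _ (by omega) (by omega)]
            exact vec_ext (by omega) (by omega) rfl
        · -- x + y > 2n, region 1, p = 0
          set gz : ℤ := 2*(n:ℤ) - (x+y)/2 with hgzd
          have hdz : x + y = 4*(n:ℤ) - 2*gz := by omega
          have hgcast : ((gz.toNat : ℕ) : ℤ) = gz := Int.toNat_of_nonneg (by omega)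
          have hrv : ((gz.toNat % n : ℕ) : ℤ) = gz := by
            rw [Nat.mod_eq_of_lt (by omega)]; exact hgcast
          refine ⟨gz, Cz_mem_T (by omega) (by omega) (by omega),
            ⟨by omega, fun _ => Or.inr ⟨by omega, by omega⟩⟩, ?_⟩
          refine capmemB gz 0 ((2*(n:ℤ)-1-x)/2).toNat (by omega) (by omega) (by omega)
            (by omega) (by omega) (x+y) ?_ ?_ rfl
          · refine emod_congr _ _ _ (-c8) ?_
            rw [hgcast, hrv]; push_cast; linear_combination hdz - hc8
          · rw [capt_base2 _ _ (by omega) (by omega)]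
            exact vec_ext (by omega) (by omega) rfl
      · -- top, label ∈ (n,2n)
        rcases lt_or_gt_of_ne hd with hxy | hxy
        · -- x + y < 2n, region 3, needs hP1
          obtain ⟨p, c, hp, hpEq⟩ := hP1
          set gz : ℤ := 2*(n:ℤ) - (x+y)/2 with hgzd
          have hdz : x + y = 4*(n:ℤ) - 2*gz := by omega
          have hgcast : ((gz.toNat : ℕ) : ℤ) = gz := Int.toNat_of_nonneg (by omega)
          refine ⟨gz, Cz_mem_T (by omega) (by omega) (by omega),
            ⟨fun _ => Or.inr ⟨by omega, by omega⟩, by omega⟩, ?_⟩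
          have hrv : ((gz.toNat % n : ℕ) : ℤ) = gz - (n:ℤ) := by
            rw [Nat.mod_eq_sub_mod (by omega), Nat.mod_eq_of_lt (by omega)]; omega
          refine capmem gz p ((x-1)/2).toNat (by omega) (by omega) (by omega)
            hp (by omega) (8*(n:ℤ)-(x+y)) ?_ ?_ rfl
          · refine emod_congr _ _ _ (-c) ?_
            rw [hgcast]; linear_combination -hdz - hpEq
          · rw [capt_base4 _ _ (by omega) (by omega)]
            exact vec_ext (by omega) (by omega) rfl
        · -- x + y > 2n, region 1, needs hP0
          obtain ⟨p, c, hp, hpEq⟩ := hP0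
          set gz : ℤ := (x+y)/2 with hgzd
          have hdz : x + y = 2*gz := by omega
          have hgcast : ((gz.toNat : ℕ) : ℤ) = gz := Int.toNat_of_nonneg (by omega)
          refine ⟨gz, Cz_mem_T (by omega) (by omega) (by omega),
            ⟨fun _ => Or.inr ⟨by omega, by omega⟩, by omega⟩, ?_⟩
          have hrv : ((gz.toNat % n : ℕ) : ℤ) = gz - (n:ℤ) := by
            rw [Nat.mod_eq_sub_mod (by omega), Nat.mod_eq_of_lt (by omega)]; omega
          refine capmem gz p ((2*(n:ℤ)-1-x)/2).toNat (by omega) (by omega) (by omega)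
            hp (by omega) (x+y) ?_ ?_ rfl
          · refine emod_congr _ _ _ (-c) ?_
            rw [hgcast]; linear_combination hdz - hpEq
          · rw [capt_base2 _ _ (by omega) (by omega)]
            exact vec_ext (by omega) (by omega) rfl
  obtain ⟨ℓ1, hT1, hinv1, hmem1⟩ := H1
  obtain ⟨ℓ2, hT2, hinv2, hmem2⟩ := H2
  refine ⟨ℓ1, ℓ2, hT1, hT2, ?_, hmem1, hmem2⟩
  rintro rfl
  rcases hf with rfl | rfl
  · rcases hinv1.2 rfl with h1 | h1 <;> rcases hinv2.2 rfl with h2 | h2 <;> omega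
  · rcases hinv1.1 rfl with h1 | h1 <;> rcases hinv2.1 rfl with h2 | h2 <;> omega

end covercap

end BishopAux
namespace BishopAux

variable {n m : ℕ}

section final

variable (hn : 0 < n) (hm0 : 0 < m)
  (h2m : ∃ c : ℤ, 2*(m:ℤ) = 2*(n:ℤ)*c) (h8 : ∃ c : ℤ, 4*(m:ℤ) = 8*(n:ℤ)*c)

include hn hm0 h2m h8

lemma L_clique {ℓ : ℤ} (hℓ : ℓ ∈ TSet n) :
    ∀ a b : ℕ, a < b → b < lenL n m ℓ → BishopMove n m (Lfun n m ℓ a) (Lfun n m ℓ b) := by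
  intro a b hab hb
  rcases Finset.mem_union.mp hℓ with h | h
  · obtain ⟨g, hg, rfl⟩ := Finset.mem_image.mp h
    obtain ⟨hgn, hgIcc⟩ := Finset.mem_erase.mp hg
    obtain ⟨hg1, hg2⟩ := Finset.mem_Icc.mp hgIcc
    rw [lenL_C (by omega)] at hb
    rw [Lfun_C g hg1]
    exact C_clique hn hm0 hg1 hg2 hgn h2m h8 a b hab hb
  · simp only [Finset.mem_insert, Finset.mem_singleton] at h
    rcases h with rfl|rfl|rfl|rfl|rfl|rfl|rfl|rfl|rfl|rfl|rfl|rfl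
    · rw [lenL_A (by omega) (by omega)] at hb
      rw [Lfun_A1]; exact Am_clique (2*(m:ℤ)) (Or.inr rfl) a b hab hb
    · rw [lenL_A (by omega) (by omega)] at hb
      rw [Lfun_A2]; exact Aa_clique (2*(m:ℤ)) (Or.inr rfl) a b hab hb
    · rw [lenL_A (by omega) (by omega)] at hb
      rw [Lfun_A3]; exact Am_clique 0 (Or.inl rfl) a b hab hb
    · rw [lenL_A (by omega) (by omega)] at hb
      rw [Lfun_A4]; exact Aa_clique 0 (Or.inl rfl) a b hab hb
    all_goals rw [lenL_B (by omega)] at hb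
    · rw [Lfun_Ba (by omega) (by omega)]; exact Ba_clique hn _ a b hab hb
    · rw [Lfun_Ba (by omega) (by omega)]; exact Ba_clique hn _ a b hab hb
    · rw [Lfun_Ba (by omega) (by omega)]; exact Ba_clique hn _ a b hab hb
    · rw [Lfun_Ba (by omega) (by omega)]; exact Ba_clique hn _ a b hab hb
    · rw [Lfun_Bd (by omega) (by omega)]; exact Bd_clique hn _ a b hab hb
    · rw [Lfun_Bd (by omega) (by omega)]; exact Bd_clique hn _ a b hab hb
    · rw [Lfun_Bd (by omega) (by omega)]; exact Bd_clique hn _ a b hab hb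
    · rw [Lfun_Bd (by omega) (by omega)]; exact Bd_clique hn _ a b hab hb

lemma cover_all (c : Pt) (hc : IsSurfSq n m c) :
    ∃ ℓ1 ℓ2 : ℤ, ℓ1 ∈ TSet n ∧ ℓ2 ∈ TSet n ∧ ℓ1 ≠ ℓ2 ∧
      (∃ t, t < lenL n m ℓ1 ∧ Lfun n m ℓ1 t = c) ∧
      (∃ t, t < lenL n m ℓ2 ∧ Lfun n m ℓ2 t = c) := by
  have hcv : c = ![c 0, c 1, c 2] := by funext j; fin_cases j <;> simp
  rw [hcv] at hc ⊢
  rw [surf_mk_iff] at hc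
  obtain ⟨⟨hb0, hb1, hb2⟩, hcase⟩ := hc
  rcases hcase with ⟨he, o1, o2⟩ | ⟨he, o1, o2⟩ | ⟨he, o1, o2⟩
  · -- x-extremal : side square
    rw [Int.odd_iff] at o1 o2
    have ho1 : 0 < c 1 := by omega
    have ho1' : c 1 < 2*(n:ℤ) := by
      rcases he with he | he <;> omega
    rcases he with he | he
    · -- c 0 = 0 : w = 8n - c 1
      have hch : ch n (8*(n:ℤ) - c 1) (c 2) = ![c 0, c 1, c 2] := by
        rw [ch_base4 _ (by omega) (by omega)]
        exact vec_ext (by omega) (by omega) rfl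
      obtain ⟨ℓ1, ℓ2, h1, h2, h3, h4, h5⟩ := cover_side hn hm0 h2m h8 (8*(n:ℤ) - c 1) (c 2)
        (by omega) o2 (by omega) (by omega)
      rw [hch] at h4 h5
      exact ⟨ℓ1, ℓ2, h1, h2, h3, h4, h5⟩
    · -- c 0 = 2n : w = 2n + c 1
      have hch : ch n (2*(n:ℤ) + c 1) (c 2) = ![c 0, c 1, c 2] := by
        rw [ch_base2 _ (by omega) (by omega)]
        exact vec_ext (by omega) (by omega) rfl
      obtain ⟨ℓ1, ℓ2, h1, h2, h3, h4, h5⟩ := cover_side hn hm0 h2m h8 (2*(n:ℤ) + c 1) (c 2)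
        (by omega) o2 (by omega) (by omega)
      rw [hch] at h4 h5
      exact ⟨ℓ1, ℓ2, h1, h2, h3, h4, h5⟩
  · -- y-extremal : side square
    rw [Int.odd_iff] at o1 o2
    have ho1 : 0 < c 0 := by omega
    have ho1' : c 0 < 2*(n:ℤ) := by
      rcases he with he | he <;> omega
    rcases he with he | he
    · have hch : ch n (c 0) (c 2) = ![c 0, c 1, c 2] := by
        rw [ch_base1 _ (by omega) (by omega)]
        exact vec_ext rfl (by omega) rfl
      obtain ⟨ℓ1, ℓ2, h1, h2, h3, h4, h5⟩ := cover_side hn hm0 h2m h8 (c 0) (c 2)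
        (by omega) o2 (by omega) (by omega)
      rw [hch] at h4 h5
      exact ⟨ℓ1, ℓ2, h1, h2, h3, h4, h5⟩
    · have hch : ch n (6*(n:ℤ) - c 0) (c 2) = ![c 0, c 1, c 2] := by
        rw [ch_base3 _ (by omega) (by omega)]
        exact vec_ext (by omega) (by omega) rfl
      obtain ⟨ℓ1, ℓ2, h1, h2, h3, h4, h5⟩ := cover_side hn hm0 h2m h8 (6*(n:ℤ) - c 0) (c 2)
        (by omega) o2 (by omega) (by omega)
      rw [hch] at h4 h5
      exact ⟨ℓ1, ℓ2, h1, h2, h3, h4, h5⟩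
  · -- z-extremal : cap square
    rw [Int.odd_iff] at o1 o2
    exact cover_cap hn hm0 h2m h8 (c 0) (c 1) (c 2) (by omega) o1 o2
      (by omega) (by omega) (by omega) (by omega)

end final

lemma TSet_card (hn : 0 < n) : (TSet n).card = 2*n + 10 := by
  rw [TSet, Finset.card_union_of_disjoint]
  · rw [Finset.card_image_of_injective _ (fun a b h => by exact_mod_cast h),
      Finset.card_erase_of_mem (Finset.mem_Icc.mpr ⟨hn, by omega⟩), Nat.card_Icc]
    have h12 : ({-1,-2,-3,-4,-5,-6,-7,-8,-9,-10,-11,-12} : Finset ℤ).card = 12 := by decide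
    rw [h12]
    omega
  · rw [Finset.disjoint_left]
    intro a ha hb
    obtain ⟨g, hg, rfl⟩ := Finset.mem_image.mp ha
    obtain ⟨-, hgIcc⟩ := Finset.mem_erase.mp hg
    obtain ⟨hg1, -⟩ := Finset.mem_Icc.mp hgIcc
    simp only [Finset.mem_insert, Finset.mem_singleton] at hb
    omega

end BishopAux

theorem bishop_indep_bound_even_k_r_zero' (n m k r : ℕ) (hn : 0 < n) (hm0 : 0 < m)
    (hnm : n ≤ m) (hk : 1 ≤ k) (hr : r < n) (hm : m = k * n + r)
    (hkeven : Even k) (hr0 : r = 0) :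
    beta0 (BishopGraph n m) ≤ n + 5 := by
  classical
  obtain ⟨k2, hk2⟩ := hkeven
  have h2m : ∃ c : ℤ, 2*(m:ℤ) = 2*(n:ℤ)*c := ⟨k, by subst hm hr0; push_cast; ring⟩
  have h8 : ∃ c : ℤ, 4*(m:ℤ) = 8*(n:ℤ)*c := ⟨k2, by subst hm hr0 hk2; push_cast; ring⟩
  unfold beta0
  have hne0 : {k | ∃ s : Finset (SurfSq n m),
      (∀ a ∈ s, ∀ b ∈ s, ¬ (BishopGraph n m).Adj a b) ∧ s.card = k}.Nonempty :=
    ⟨0, ⟨∅, by simp, rfl⟩⟩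
  refine csSup_le hne0 ?_
  rintro β ⟨s, hs, rfl⟩
  have hcov := fun (a : SurfSq n m) =>
    BishopAux.cover_all hn hm0 h2m h8 a.1 a.2
  choose ℓ1 ℓ2 hT1 hT2 hnel hm1 hm2 using hcov
  set F : SurfSq n m → Finset ℤ := fun a => {ℓ1 a, ℓ2 a} with hF
  have hcard : ∀ a, (F a).card = 2 := fun a => Finset.card_pair (hnel a)
  have hkey : ∀ a ∈ s, ∀ b ∈ s, a ≠ b → Disjoint (F a) (F b) := by
    intro a ha b hb hab
    rw [Finset.disjoint_left]
    intro ℓ hℓa hℓb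
    have hmema : ∃ t, t < BishopAux.lenL n m ℓ ∧ BishopAux.Lfun n m ℓ t = a.1 := by
      rcases Finset.mem_insert.mp hℓa with rfl | hℓa'
      · exact hm1 a
      · rw [Finset.mem_singleton.mp hℓa']; exact hm2 a
    have hmemb : ∃ t, t < BishopAux.lenL n m ℓ ∧ BishopAux.Lfun n m ℓ t = b.1 := by
      rcases Finset.mem_insert.mp hℓb with rfl | hℓb'
      · exact hm1 b
      · rw [Finset.mem_singleton.mp hℓb']; exact hm2 b
    have hℓT : ℓ ∈ BishopAux.TSet n := by
      rcases Finset.mem_insert.mp hℓa with rfl | hℓa'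
      · exact hT1 a
      · rw [Finset.mem_singleton.mp hℓa']; exact hT2 a
    obtain ⟨ta, hta, htaeq⟩ := hmema
    obtain ⟨tb, htb, htbeq⟩ := hmemb
    have hne' : a.1 ≠ b.1 := fun h => hab (Subtype.ext h)
    have hmove : BishopMove n m a.1 b.1 ∨ BishopMove n m b.1 a.1 := by
      rcases Nat.lt_trichotomy ta tb with h | h | h
      · left
        rw [← htaeq, ← htbeq]
        exact BishopAux.L_clique hn hm0 h2m h8 hℓT ta tb h htb
      · exact absurd (by rw [← htaeq, ← htbeq, h]) hne'
      · right
        rw [← htaeq, ← htbeq]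
        exact BishopAux.L_clique hn hm0 h2m h8 hℓT tb ta h hta
    have : (BishopGraph n m).Adj a b := by
      rw [BishopGraph, SimpleGraph.fromRel_adj]
      exact ⟨hab, hmove⟩
    exact hs a ha b hb this
  have hsum : (s.biUnion F).card = 2 * s.card := by
    rw [Finset.card_biUnion hkey]
    rw [Finset.sum_congr rfl (fun a _ => hcard a), Finset.sum_const, smul_eq_mul]
    ring
  have hsub : s.biUnion F ⊆ BishopAux.TSet n := by
    refine Finset.biUnion_subset.mpr fun a _ => ?_
    intro ℓ hℓ
    rcases Finset.mem_insert.mp hℓ with rfl | hℓ'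
    · exact hT1 a
    · rw [Finset.mem_singleton.mp hℓ']; exact hT2 a
  have := Finset.card_le_card hsub
  rw [hsum, BishopAux.TSet_card hn] at this
  omega

theorem bishop_indep_bound_even_k_r_zero (n m k r : ℕ) (hn : 0 < n) (hm0 : 0 < m) (hnm : n ≤ m)
    (hk : 1 ≤ k) (hr : r < n) (hm : m = k * n + r)
    (hkeven : Even k) (hr0 : r = 0) :
    beta0 (BishopGraph n m) ≤ n + 5 :=
  bishop_indep_bound_even_k_r_zero' n m k r hn hm0 hnm hk hr hm hkeven hr0
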